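/- arXiv:0711.1443 — 3 statements merged into one kernel-verified Lean document; each statement's English description precedes it below -/
import Mathlib

section
/- Let T be a triangulation of a polygon and suppose the polygon is divided by a diagonal of T into two parts P and Q. For a vertex subset I, the number of matchings between I and T equals the sum over all partitions J = J' ⊔ J'' of the set J of vertices of I lying on the dividing diagonal, of the product of the number of matchings between (I ∩ P) \ J' and the triangles of T in P and the number of matchings between (I ∩ Q) \ J'' and the triangles of T in Q. -/
noncomputable section
open scoped Classical

namespace Frieze

/-- Vertices of the disc with `N` marked points, labelled clockwise. -/
abbrev Vx (N : ℕ) := ZMod N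

/-- `Btw a x b` : `x` lies strictly between `a` and `b`, going clockwise. -/
def Btw {N : ℕ} (a x b : Vx N) : Prop :=
  0 < (x - a).val ∧ (x - a).val < (b - a).val

/-- A valid diagonal (arc) of the unpunctured disc: endpoints distinct and non-adjacent. -/
def IsDiag (N : ℕ) (p : Vx N × Vx N) : Prop :=
  p.2 ≠ p.1 ∧ p.2 ≠ p.1 + 1 ∧ p.1 ≠ p.2 + 1

/-- Two chords cross iff their endpoints strictly interleave in the cyclic order. -/
def DCross {N : ℕ} (p q : Vx N × Vx N) : Prop :=
  (Btw p.1 q.1 p.2 ∧ Btw p.2 q.2 p.1) ∨ (Btw p.1 q.2 p.2 ∧ Btw p.2 q.1 p.1)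

/-- A triangulation of the unpunctured disc with `N` marked points:
a maximal collection of pairwise noncrossing diagonals (each recorded once). -/
structure Triang (N : ℕ) where
  diag : Finset (Vx N × Vx N)
  valid : ∀ p ∈ diag, IsDiag N p
  nodupSym : ∀ p ∈ diag, (p.2, p.1) ∉ diag
  noncross : ∀ p ∈ diag, ∀ q ∈ diag, ¬ DCross p q
  maximal : ∀ p, IsDiag N p → (∀ q ∈ diag, ¬ DCross p q) → p ∈ diag ∨ (p.2, p.1) ∈ diag

/-- The unordered diagonal `{a,b}` belongs to `T`. -/
def MemD {N : ℕ} (T : Triang N) (a b : Vx N) : Prop :=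
  (a, b) ∈ T.diag ∨ (b, a) ∈ T.diag

/-- The segment from `a` to `a + d` (going `d` steps clockwise) can be a side of a
triangle: it is a boundary edge (`d = 1`) or a diagonal of `T`. -/
def USide {N : ℕ} (T : Triang N) (a : Vx N) (d : ℕ) : Prop :=
  d = 1 ∨ MemD T a (a + (d : Vx N))

/-- `(a, p, q)` encodes the triangle with vertices `a`, `a+p`, `a+p+q` (clockwise);
the canonicity condition (`a` carries the smallest label) makes each triangle of
the triangulation be recorded exactly once. -/
def IsUTri {N : ℕ} (T : Triang N) (t : Vx N × ℕ × ℕ) : Prop :=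
  1 ≤ t.2.1 ∧ 1 ≤ t.2.2 ∧ t.2.1 + t.2.2 ≤ N - 1 ∧
  USide T t.1 t.2.1 ∧ USide T (t.1 + (t.2.1 : Vx N)) t.2.2 ∧
  USide T (t.1 + ((t.2.1 + t.2.2 : ℕ) : Vx N)) (N - t.2.1 - t.2.2) ∧
  t.1.val < (t.1 + (t.2.1 : Vx N)).val ∧ t.1.val < (t.1 + ((t.2.1 + t.2.2 : ℕ) : Vx N)).val

/-- Incidence of a vertex with a triangle. -/
def UInc {N : ℕ} (v : Vx N) (t : Vx N × ℕ × ℕ) : Prop :=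
  v = t.1 ∨ v = t.1 + (t.2.1 : Vx N) ∨ v = t.1 + ((t.2.1 + t.2.2 : ℕ) : Vx N)

/-- The number of matchings between the vertex set `I` and those triangles of `T`
lying in `S` : injective allocations, to each vertex of `I`, of an incident triangle. -/
def UMatchIn {N : ℕ} (T : Triang N) (I : Finset (Vx N)) (S : Set (Vx N × ℕ × ℕ)) : ℕ :=
  Set.ncard {f : I → Vx N × ℕ × ℕ | Function.Injective f ∧
    ∀ v : I, IsUTri T (f v) ∧ f v ∈ S ∧ UInc v.1 (f v)}

/-- The number of matchings between the vertex set `I` and the triangulation `T`. -/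
def UMatch {N : ℕ} (T : Triang N) (I : Finset (Vx N)) : ℕ :=
  UMatchIn T I Set.univ

/-- `n_{ij}` : the number of matchings between `T` and all marked points except `i, j`. -/
def nMatch {N : ℕ} [NeZero N] (T : Triang N) (i j : Vx N) : ℕ :=
  UMatch T (Finset.univ \ {i, j})

/-- `i` and `j` are joined by an edge of the triangulated polygon
(a boundary edge or a diagonal of `T`). -/
def Joined {N : ℕ} (T : Triang N) (i j : Vx N) : Prop :=
  j = i + 1 ∨ i = j + 1 ∨ MemD T i j

/-- `x` lies in the closed clockwise arc from `a` to `b`. -/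
def InCWArc {N : ℕ} (a x b : Vx N) : Prop := x = a ∨ x = b ∨ Btw a x b

/-- `ℓ` is the Conway–Coxeter labelling of the vertices based at `i` : the vertex `i`
is labelled `0`, every vertex joined to `i` by an edge (of `T`, or a boundary edge)
is labelled `1`, and in each triangle the vertex on the far side from `i` is labelled
by the sum of the labels of the other two vertices.  The label `ℓ j` is then the
Conway–Coxeter frieze entry `(i,j)`. -/
def IsCCLabel {N : ℕ} (T : Triang N) (i : Vx N) (ℓ : Vx N → ℕ) : Prop :=
  ℓ i = 0 ∧ (∀ j, Joined T i j → ℓ j = 1) ∧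
  ∀ a p q, IsUTri T (a, p, q) →
    (InCWArc (a + ((p + q : ℕ) : Vx N)) i a →
      ℓ (a + (p : Vx N)) = ℓ a + ℓ (a + ((p + q : ℕ) : Vx N))) ∧
    (InCWArc a i (a + (p : Vx N)) →
      ℓ (a + ((p + q : ℕ) : Vx N)) = ℓ a + ℓ (a + (p : Vx N))) ∧
    (InCWArc (a + (p : Vx N)) i (a + ((p + q : ℕ) : Vx N)) →
      ℓ a = ℓ (a + (p : Vx N)) + ℓ (a + ((p + q : ℕ) : Vx N)))

/-- The vertices lying (weakly) on the side of the chord `{a,b}` given by the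
closed clockwise arc from `a` to `b`. -/
def SideVerts {N : ℕ} (a b : Vx N) : Set (Vx N) := {v | v = a ∨ v = b ∨ Btw a v b}

/-- The triangles all of whose vertices lie on the `a`-to-`b` (clockwise) side of
the chord `{a,b}`, i.e. the triangles of the part `P` cut out by this diagonal. -/
def TriIn {N : ℕ} (a b : Vx N) : Set (Vx N × ℕ × ℕ) :=
  {t | t.1 ∈ SideVerts a b ∧ t.1 + (t.2.1 : Vx N) ∈ SideVerts a b ∧
       t.1 + ((t.2.1 + t.2.2 : ℕ) : Vx N) ∈ SideVerts a b}

section Aux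
set_option linter.unusedSectionVars false
variable {N : ℕ} [NeZero N]

/-- coordinate of `x` relative to basepoint `a`. -/
def cc (a x : Vx N) : ℕ := (x - a).val

lemma cc_lt (a x : Vx N) : cc a x < N := ZMod.val_lt _

lemma cc_eq_zero {a x : Vx N} : cc a x = 0 ↔ x = a := by
  unfold cc; rw [ZMod.val_eq_zero, sub_eq_zero]

lemma cc_inj {a x y : Vx N} (h : cc a x = cc a y) : x = y := by
  have := ZMod.val_injective N h
  exact sub_left_injective.eq_iff.mp this

lemma cc_eq_iff {a x y : Vx N} : cc a x = cc a y ↔ x = y :=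
  ⟨cc_inj, fun h => by rw [h]⟩

lemma val_sub_eq (z w : ZMod N) : (z - w).val = (z.val + (N - w.val)) % N := by
  rw [sub_eq_add_neg, ZMod.val_add, ZMod.neg_val']
  conv_lhs => rw [Nat.add_mod]
  rw [Nat.mod_mod_of_dvd _ dvd_rfl, ← Nat.add_mod]

lemma cc_base_swap (a b x : Vx N) : cc b x = (cc a x + (N - cc a b)) % N := by
  unfold cc
  rw [← sub_sub_sub_cancel_right x b a]
  exact val_sub_eq _ _

lemma btw_iff_cc {a b x : Vx N} : Btw a x b ↔ 0 < cc a x ∧ cc a x < cc a b := Iff.rfl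

lemma btw_rev_iff {a b x : Vx N} (hb : 0 < cc a b) : Btw b x a ↔ cc a b < cc a x := by
  have hβ : cc a b < N := cc_lt a b
  have hγ : cc a x < N := cc_lt a x
  have h1 : cc b a = N - cc a b := by
    rw [cc_base_swap a b a]
    have h0 : cc a a = 0 := cc_eq_zero.mpr rfl
    rw [h0, Nat.zero_add, Nat.mod_eq_of_lt (by omega)]
  have h2 : cc b x = (cc a x + (N - cc a b)) % N := cc_base_swap a b x
  show 0 < cc b x ∧ cc b x < cc b a ↔ _
  rw [h1, h2]
  rcases le_or_gt (cc a b) (cc a x) with h | h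
  · have : (cc a x + (N - cc a b)) = (cc a x - cc a b) + N := by omega
    rw [this, Nat.add_mod_right, Nat.mod_eq_of_lt (by omega)]
    omega
  · rw [Nat.mod_eq_of_lt (by omega)]
    omega

lemma cc_add_nat (a u : Vx N) (d : ℕ) (hd : d < N) : cc a (u + (d : Vx N)) = (cc a u + d) % N := by
  unfold cc
  rw [show u + (d : Vx N) - a = (u - a) + (d : Vx N) by ring, ZMod.val_add, ZMod.val_natCast,
    Nat.mod_eq_of_lt hd]

/-- `{u,v}` straddles the chord `{a,b}` strictly. -/
def Straddle (a b u v : Vx N) : Prop :=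
  (0 < cc a u ∧ cc a u < cc a b ∧ cc a b < cc a v) ∨
  (0 < cc a v ∧ cc a v < cc a b ∧ cc a b < cc a u)

lemma dcross_ab_iff {a b u v : Vx N} (hb : 0 < cc a b) :
    DCross (a, b) (u, v) ↔ Straddle a b u v := by
  unfold DCross Straddle
  simp only [btw_rev_iff hb]
  show ((0 < cc a u ∧ cc a u < cc a b) ∧ _) ∨ ((0 < cc a v ∧ cc a v < cc a b) ∧ _) ↔ _
  tauto

lemma dcross_comm_left {p₁ p₂ q₁ q₂ : Vx N} :
    DCross (p₂, p₁) (q₁, q₂) ↔ DCross (p₁, p₂) (q₁, q₂) := by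
  unfold DCross; dsimp only; tauto

lemma dcross_comm_right {p₁ p₂ q₁ q₂ : Vx N} :
    DCross (p₁, p₂) (q₂, q₁) ↔ DCross (p₁, p₂) (q₁, q₂) := by
  unfold DCross; dsimp only; tauto

lemma noncross_memD (T : Triang N) {u v x y : Vx N} (h1 : MemD T u v) (h2 : MemD T x y) :
    ¬ DCross (u, v) (x, y) := by
  rcases h1 with h1 | h1 <;> rcases h2 with h2 | h2 <;> intro hc
  · exact T.noncross _ h1 _ h2 hc
  · exact T.noncross _ h1 _ h2 (dcross_comm_right.mpr hc)
  · exact T.noncross _ h1 _ h2 (dcross_comm_left.mpr hc)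
  · exact T.noncross _ h1 _ h2 (dcross_comm_left.mpr (dcross_comm_right.mpr hc))

lemma uside_no_straddle (T : Triang N) {a b : Vx N} (hab : MemD T a b) (hb : 0 < cc a b)
    {u : Vx N} {d : ℕ} (hd1 : 1 ≤ d) (hdN : d < N) (hus : USide T u d) :
    ¬ Straddle a b u (u + (d : Vx N)) := by
  have hv := cc_add_nat a u d hdN
  rcases hus with rfl | hm
  · have hγ : cc a u < N := cc_lt a u
    rcases Nat.lt_or_ge (cc a u + 1) N with h | h
    · rw [Nat.mod_eq_of_lt h] at hv
      intro hs; unfold Straddle at hs; omega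
    · have he : cc a u + 1 = N := by omega
      rw [he, Nat.mod_self] at hv
      intro hs; unfold Straddle at hs; omega
  · intro hs
    exact noncross_memD T hab hm ((dcross_ab_iff hb).mpr hs)

lemma mem_sideverts_ab {a b x : Vx N} : x ∈ SideVerts a b ↔ cc a x ≤ cc a b := by
  unfold SideVerts
  simp only [Set.mem_setOf_eq, btw_iff_cc]
  constructor
  · rintro (rfl | rfl | h)
    · simp [cc_eq_zero.mpr rfl]
    · exact le_refl _
    · omega
  · intro h
    rcases Nat.eq_zero_or_pos (cc a x) with h0 | h0
    · exact Or.inl (cc_eq_zero.mp h0)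
    · rcases Nat.lt_or_ge (cc a x) (cc a b) with h1 | h1
      · exact Or.inr (Or.inr ⟨h0, h1⟩)
      · exact Or.inr (Or.inl (cc_inj (a := a) (by omega)))

lemma mem_sideverts_ba {a b x : Vx N} (hb : 0 < cc a b) :
    x ∈ SideVerts b a ↔ (cc a x = 0 ∨ cc a b ≤ cc a x) := by
  unfold SideVerts
  simp only [Set.mem_setOf_eq, btw_rev_iff hb]
  constructor
  · rintro (rfl | rfl | h)
    · exact Or.inr (le_refl _)
    · exact Or.inl (cc_eq_zero.mpr rfl)
    · exact Or.inr (le_of_lt h)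
  · rintro (h | h)
    · exact Or.inr (Or.inl (cc_eq_zero.mp h))
    · rcases Nat.eq_or_lt_of_le h with h1 | h1
      · exact Or.inl (cc_inj h1.symm)
      · exact Or.inr (Or.inr h1)

end Aux

section Aux2
set_option linter.unusedSectionVars false
variable {N : ℕ} [NeZero N]

lemma tri_dichotomy (T : Triang N) {a b : Vx N} (hab : MemD T a b) (hb : 0 < cc a b)
    (t : Vx N × ℕ × ℕ) (ht : IsUTri T t) :
    (t ∈ TriIn a b ∧ t ∉ TriIn b a) ∨ (t ∈ TriIn b a ∧ t ∉ TriIn a b) := by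
  obtain ⟨x, p, q⟩ := t
  obtain ⟨hp, hq, hpq, s0, s1, s2, -, -⟩ := ht
  dsimp only at hp hq hpq s0 s1 s2
  have hN3 : 3 ≤ N := by omega
  have hne : ∀ d : ℕ, 1 ≤ d → d < N → (d : Vx N) ≠ 0 := by
    intro d h1 h2 h
    have hdvd := (ZMod.natCast_eq_zero_iff d N).mp h
    have := Nat.le_of_dvd (by omega) hdvd
    omega
  set v0 := x with hv0
  set v1 := x + (p : Vx N) with hv1
  set v2 := x + ((p + q : ℕ) : Vx N) with hv2
  have e2 : v1 + (q : Vx N) = v2 := by rw [hv1, hv2]; push_cast; ring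
  have e3 : v2 + ((N - p - q : ℕ) : Vx N) = v0 := by
    rw [hv2, hv0, add_assoc, ← Nat.cast_add]
    rw [show p + q + (N - p - q) = N by omega, ZMod.natCast_self, add_zero]
  have S01 : ¬ Straddle a b v0 v1 := uside_no_straddle T hab hb hp (by omega) s0
  have S12 : ¬ Straddle a b v1 v2 := by
    have := uside_no_straddle T hab hb hq (by omega) s1; rwa [e2] at this
  have S20 : ¬ Straddle a b v2 v0 := by
    have := uside_no_straddle T hab hb (d := N - p - q) (by omega) (by omega) s2
    rwa [e3] at this
  have d01 : v0 ≠ v1 := fun h => hne p hp (by omega) (left_eq_add.mp h)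
  have d12 : v1 ≠ v2 := fun h => hne q hq (by omega) (left_eq_add.mp (e2 ▸ h))
  have d02 : v0 ≠ v2 := fun h => hne (p + q) (by omega) (by omega) (left_eq_add.mp h)
  have c01 : cc a v0 ≠ cc a v1 := fun h => d01 (cc_inj h)
  have c12 : cc a v1 ≠ cc a v2 := fun h => d12 (cc_inj h)
  have c02 : cc a v0 ≠ cc a v2 := fun h => d02 (cc_inj h)
  simp only [TriIn, Set.mem_setOf_eq, mem_sideverts_ab, mem_sideverts_ba hb]
  unfold Straddle at S01 S12 S20
  simp only [show v0 + (p : Vx N) = v1 from rfl,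
    show v0 + ((p + q : ℕ) : Vx N) = v2 from rfl]
  omega

lemma inc_side {a b v : Vx N} {t : Vx N × ℕ × ℕ} (h : UInc v t) (ht : t ∈ TriIn a b) :
    v ∈ SideVerts a b := by
  rcases h with rfl | rfl | rfl
  exacts [ht.1, ht.2.1, ht.2.2]

end Aux2

section Count

lemma ncard_prod {α β : Type*} (s : Set α) (t : Set β) :
    (s ×ˢ t).ncard = s.ncard * t.ncard := by
  rw [← Nat.card_coe_set_eq, ← Nat.card_coe_set_eq, ← Nat.card_coe_set_eq,
    Nat.card_congr (Equiv.Set.prod s t), Nat.card_prod]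

lemma ncard_fiber_sum {α γ : Type*} [DecidableEq γ] {A : Set α} (hA : A.Finite) (s : Finset γ)
    (key : α → γ) (h : ∀ f ∈ A, key f ∈ s) :
    A.ncard = ∑ j ∈ s, (A ∩ key ⁻¹' {j}).ncard := by
  classical
  rw [Set.ncard_eq_toFinset_card A hA,
    Finset.card_eq_sum_card_fiberwise (f := key) (t := s)
      (fun x hx => h x (hA.mem_toFinset.mp hx))]
  refine Finset.sum_congr rfl fun j hj => ?_
  rw [← Set.ncard_coe_finset]
  congr 1
  ext x
  simp only [Finset.coe_filter, Set.mem_setOf_eq, Set.Finite.mem_toFinset, Set.mem_inter_iff,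
    Set.mem_preimage, Set.mem_singleton_iff]

end Count

/-- If a diagonal `{a,b}` of `T` divides the polygon into two
parts `P` and `Q` then, for a vertex subset `I` with `J := I ∩ {a, b}`, the number
of matchings between `I` and `T` is the sum, over all partitions `J = J' ⊔ J''`,
of the number of matchings between `(I ∩ P) \ J'` and the triangles of `T` in `P`
times the number of matchings between `(I ∩ Q) \ J''` and the triangles of `T`
in `Q`. -/
theorem matchings_decomposition (N : ℕ) (hN : 3 ≤ N) (T : Triang N)
    (a b : Vx N) (hab : MemD T a b) (I : Finset (Vx N)) :
    UMatch T I =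
      ∑ J' ∈ (I.filter (fun v => v = a ∨ v = b)).powerset,
        UMatchIn T ((I.filter (fun v => v ∈ SideVerts a b)) \ J') (TriIn a b) *
        UMatchIn T ((I.filter (fun v => v ∈ SideVerts b a)) \
            ((I.filter (fun v => v = a ∨ v = b)) \ J')) (TriIn b a) := by
  haveI : NeZero N := ⟨by omega⟩
  have hba : b ≠ a := by
    rcases hab with h | h
    · exact (T.valid _ h).1
    · exact ((T.valid _ h).1).symm
  have hb : 0 < cc a b := by
    rcases Nat.eq_zero_or_pos (cc a b) with h | h
    · exact absurd (cc_eq_zero.mp h) hba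
    · exact h
  set J := I.filter (fun v => v = a ∨ v = b) with hJdef
  set P := I.filter (fun v => v ∈ SideVerts a b) with hPdef
  set Q := I.filter (fun v => v ∈ SideVerts b a) with hQdef
  have hPmem : ∀ v, v ∈ P ↔ v ∈ I ∧ cc a v ≤ cc a b := by
    intro v; rw [hPdef, Finset.mem_filter, mem_sideverts_ab]
  have hQmem : ∀ v, v ∈ Q ↔ v ∈ I ∧ (cc a v = 0 ∨ cc a b ≤ cc a v) := by
    intro v; rw [hQdef, Finset.mem_filter, mem_sideverts_ba hb]
  have hJmem : ∀ v, v ∈ J ↔ v ∈ I ∧ (cc a v = 0 ∨ cc a v = cc a b) := by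
    intro v; rw [hJdef, Finset.mem_filter]
    constructor
    · rintro ⟨hv, rfl | rfl⟩
      · exact ⟨hv, Or.inl (cc_eq_zero.mpr rfl)⟩
      · exact ⟨hv, Or.inr rfl⟩
    · rintro ⟨hv, h | h⟩
      · exact ⟨hv, Or.inl (cc_eq_zero.mp h)⟩
      · exact ⟨hv, Or.inr (cc_inj (a := a) h)⟩
  have hJP : J ⊆ P := by
    intro v hv
    obtain ⟨h1, h2⟩ := (hJmem v).mp hv
    exact (hPmem v).mpr ⟨h1, by omega⟩
  have hJQ : J ⊆ Q := by
    intro v hv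
    obtain ⟨h1, h2⟩ := (hJmem v).mp hv
    exact (hQmem v).mpr ⟨h1, by omega⟩
  have hPQJ : ∀ v, v ∈ P → v ∈ Q → v ∈ J := by
    intro v h1 h2
    rw [hPmem] at h1; rw [hQmem] at h2
    exact (hJmem v).mpr ⟨h1.1, by omega⟩
  have hPQ : ∀ v ∈ I, v ∈ P ∨ v ∈ Q := by
    intro v hv
    rcases le_or_gt (cc a v) (cc a b) with h | h
    · exact Or.inl ((hPmem v).mpr ⟨hv, h⟩)
    · exact Or.inr ((hQmem v).mpr ⟨hv, Or.inr h.le⟩)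
  have hPI : P ⊆ I := Finset.filter_subset _ _
  have hQI : Q ⊆ I := Finset.filter_subset _ _
  have hJI : J ⊆ I := Finset.filter_subset _ _
  have hQmem' : ∀ v, v ∈ I → v ∈ SideVerts b a → v ∈ Q := by
    intro v h1 h2; rw [hQdef]; exact Finset.mem_filter.mpr ⟨h1, h2⟩
  have hPmem' : ∀ v, v ∈ I → v ∈ SideVerts a b → v ∈ P := by
    intro v h1 h2; rw [hPdef]; exact Finset.mem_filter.mpr ⟨h1, h2⟩
  have hdich : ∀ t, IsUTri T t →
      (t ∈ TriIn a b ∧ t ∉ TriIn b a) ∨ (t ∈ TriIn b a ∧ t ∉ TriIn a b) :=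
    fun t ht => tri_dichotomy T hab hb t ht
  set A : Set ({x // x ∈ I} → Vx N × ℕ × ℕ) :=
    {f | Function.Injective f ∧ ∀ v : I, IsUTri T (f v) ∧ f v ∈ Set.univ ∧ UInc v.1 (f v)}
    with hAdef
  set key : ({x // x ∈ I} → Vx N × ℕ × ℕ) → Finset (Vx N) :=
    fun f => J.filter (fun w => ∃ h : w ∈ I, f ⟨w, h⟩ ∈ TriIn b a) with hkeydef
  have hkeymem : ∀ (f : {x // x ∈ I} → Vx N × ℕ × ℕ) (w : Vx N),
      w ∈ key f ↔ w ∈ J ∧ ∃ h : w ∈ I, f ⟨w, h⟩ ∈ TriIn b a := by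
    intro f w; rw [hkeydef]; exact Finset.mem_filter
  have hTfin : {t : Vx N × ℕ × ℕ | IsUTri T t}.Finite := by
    apply Set.Finite.subset
      ((Set.finite_univ (α := Vx N)).prod ((Set.finite_Iic N).prod (Set.finite_Iic N)))
    rintro ⟨x, p, q⟩ ht
    obtain ⟨h1, h2, h3, -⟩ := ht
    dsimp only at h3
    simp only [Set.mem_prod, Set.mem_univ, Set.mem_Iic, true_and]
    omega
  have hAfin : A.Finite := by
    apply Set.Finite.subset (Set.Finite.pi
      (fun _ : {x // x ∈ I} => hTfin))
    intro f hf v _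
    exact (hf.2 v).1
  rw [show UMatch T I = A.ncard from rfl]
  rw [ncard_fiber_sum hAfin J.powerset key
    (fun f _ => Finset.mem_powerset.mpr (Finset.filter_subset _ _))]
  refine Finset.sum_congr rfl fun J' hJ' => ?_
  have hJ'sub : J' ⊆ J := Finset.mem_powerset.mp hJ'
  have hPJI : ∀ v, v ∈ P \ J' → v ∈ I := fun v hv => hPI (Finset.mem_sdiff.mp hv).1
  have hQJI : ∀ v, v ∈ Q \ (J \ J') → v ∈ I := fun v hv => hQI (Finset.mem_sdiff.mp hv).1
  have hcover : ∀ v ∈ I, v ∈ P \ J' ∨ v ∈ Q \ (J \ J') := by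
    intro v hv
    rcases hPQ v hv with h | h
    · by_cases hj : v ∈ J'
      · exact Or.inr (Finset.mem_sdiff.mpr ⟨hJQ (hJ'sub hj),
          fun hmem => (Finset.mem_sdiff.mp hmem).2 hj⟩)
      · exact Or.inl (Finset.mem_sdiff.mpr ⟨h, hj⟩)
    · by_cases hj : v ∈ J \ J'
      · exact Or.inl (Finset.mem_sdiff.mpr
          ⟨hJP (Finset.mem_sdiff.mp hj).1, (Finset.mem_sdiff.mp hj).2⟩)
      · exact Or.inr (Finset.mem_sdiff.mpr ⟨h, hj⟩)
  have hdisj : ∀ v, v ∈ P \ J' → v ∈ Q \ (J \ J') → False := by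
    intro v h1 h2
    obtain ⟨h1p, h1j⟩ := Finset.mem_sdiff.mp h1
    obtain ⟨h2q, h2j⟩ := Finset.mem_sdiff.mp h2
    exact h2j (Finset.mem_sdiff.mpr ⟨hPQJ v h1p h2q, h1j⟩)
  set Bs : Set ({x // x ∈ P \ J'} → Vx N × ℕ × ℕ) :=
    {g | Function.Injective g ∧
      ∀ v : {x // x ∈ P \ J'}, IsUTri T (g v) ∧ g v ∈ TriIn a b ∧ UInc v.1 (g v)}
    with hBdef
  set Cs : Set ({x // x ∈ Q \ (J \ J')} → Vx N × ℕ × ℕ) :=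
    {g | Function.Injective g ∧
      ∀ v : {x // x ∈ Q \ (J \ J')}, IsUTri T (g v) ∧ g v ∈ TriIn b a ∧ UInc v.1 (g v)}
    with hCdef
  rw [show UMatchIn T (P \ J') (TriIn a b) = Bs.ncard from rfl,
    show UMatchIn T (Q \ (J \ J')) (TriIn b a) = Cs.ncard from rfl, ← ncard_prod]
  set Φ : ({x // x ∈ I} → Vx N × ℕ × ℕ) →
      (({x // x ∈ P \ J'} → Vx N × ℕ × ℕ) ×
       ({x // x ∈ Q \ (J \ J')} → Vx N × ℕ × ℕ)) :=
    fun f => (fun v => f ⟨v.1, hPJI v.1 v.2⟩, fun v => f ⟨v.1, hQJI v.1 v.2⟩) with hΦdef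
  have hbij : Set.BijOn Φ (A ∩ key ⁻¹' {J'}) (Bs ×ˢ Cs) := by
    refine ⟨?_, ?_, ?_⟩
    · -- MapsTo
      rintro f ⟨⟨hfinj, hfall⟩, hfkey⟩
      have hk : key f = J' := hfkey
      refine ⟨⟨?_, ?_⟩, ⟨?_, ?_⟩⟩
      · intro u v huv
        have h2 := congrArg Subtype.val (hfinj huv)
        exact Subtype.ext h2
      · intro v
        have hvI : v.1 ∈ I := hPJI v.1 v.2
        have h1 := (hfall ⟨v.1, hvI⟩).1
        have hinc := (hfall ⟨v.1, hvI⟩).2.2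
        refine ⟨h1, ?_, hinc⟩
        rcases hdich _ h1 with ⟨hin, -⟩ | ⟨hin, -⟩
        · exact hin
        · exfalso
          obtain ⟨hvP, hvJ'⟩ := Finset.mem_sdiff.mp v.2
          by_cases hvJ : v.1 ∈ J
          · exact hvJ' (hk ▸ (hkeymem f v.1).mpr ⟨hvJ, hvI, hin⟩)
          · exact hvJ (hPQJ v.1 hvP (hQmem' v.1 hvI (inc_side hinc hin)))
      · intro u v huv
        have h2 := congrArg Subtype.val (hfinj huv)
        exact Subtype.ext h2
      · intro v
        have hvI : v.1 ∈ I := hQJI v.1 v.2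
        have h1 := (hfall ⟨v.1, hvI⟩).1
        have hinc := (hfall ⟨v.1, hvI⟩).2.2
        refine ⟨h1, ?_, hinc⟩
        rcases hdich _ h1 with ⟨hin, hnot⟩ | ⟨hin, -⟩
        · exfalso
          obtain ⟨hvQ, hvJJ⟩ := Finset.mem_sdiff.mp v.2
          by_cases hvJ : v.1 ∈ J
          · have hvJ' : v.1 ∈ J' := by
              by_contra hno
              exact hvJJ (Finset.mem_sdiff.mpr ⟨hvJ, hno⟩)
            have hvk : v.1 ∈ key f := by rw [hk]; exact hvJ'
            obtain ⟨-, h, hh⟩ := (hkeymem f v.1).mp hvk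
            exact hnot hh
          · exact hvJ (hPQJ v.1 (hPmem' v.1 hvI (inc_side hinc hin)) hvQ)
        · exact hin
    · -- InjOn
      intro f _ g _ hfg
      funext v
      rcases hcover v.1 v.2 with h | h
      · exact congrFun (congrArg Prod.fst hfg) ⟨v.1, h⟩
      · exact congrFun (congrArg Prod.snd hfg) ⟨v.1, h⟩
    · -- SurjOn
      rintro ⟨g, h⟩ hgh
      have hg : g ∈ Bs := hgh.1
      have hh : h ∈ Cs := hgh.2
      set f : {x // x ∈ I} → Vx N × ℕ × ℕ :=
        fun v => if hp : v.1 ∈ P \ J' then g ⟨v.1, hp⟩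
          else h ⟨v.1, (hcover v.1 v.2).resolve_left hp⟩ with hfdef
      have hfp : ∀ (v : {x // x ∈ I}) (hp : v.1 ∈ P \ J'), f v = g ⟨v.1, hp⟩ := by
        intro v hp; simp only [hfdef]; rw [dif_pos hp]
      have hfq : ∀ (v : {x // x ∈ I}) (hq : v.1 ∈ Q \ (J \ J')),
          f v = h ⟨v.1, hq⟩ := by
        intro v hq
        have hp : ¬ v.1 ∈ P \ J' := fun hp => hdisj v.1 hp hq
        simp only [hfdef]; rw [dif_neg hp]
      refine ⟨f, ⟨⟨?_, ?_⟩, ?_⟩, ?_⟩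
      · -- injective
        intro u v huv
        rcases hcover u.1 u.2 with hu | hu <;> rcases hcover v.1 v.2 with hv | hv
        · rw [hfp u hu, hfp v hv] at huv
          have h2 := congrArg Subtype.val (hg.1 huv)
          exact Subtype.ext h2
        · exfalso
          rw [hfp u hu, hfq v hv] at huv
          rcases hdich _ (hg.2 ⟨u.1, hu⟩).1 with ⟨-, hnot⟩ | ⟨-, hnot⟩
          · apply hnot; rw [huv]; exact (hh.2 ⟨v.1, hv⟩).2.1
          · exact hnot (hg.2 ⟨u.1, hu⟩).2.1
        · exfalso
          rw [hfq u hu, hfp v hv] at huv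
          rcases hdich _ (hg.2 ⟨v.1, hv⟩).1 with ⟨-, hnot⟩ | ⟨-, hnot⟩
          · apply hnot; rw [← huv]; exact (hh.2 ⟨u.1, hu⟩).2.1
          · exact hnot (hg.2 ⟨v.1, hv⟩).2.1
        · rw [hfq u hu, hfq v hv] at huv
          have h2 := congrArg Subtype.val (hh.1 huv)
          exact Subtype.ext h2
      · -- properties
        intro v
        rcases hcover v.1 v.2 with hv | hv
        · rw [hfp v hv]
          exact ⟨(hg.2 ⟨v.1, hv⟩).1, trivial, (hg.2 ⟨v.1, hv⟩).2.2⟩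
        · rw [hfq v hv]
          exact ⟨(hh.2 ⟨v.1, hv⟩).1, trivial, (hh.2 ⟨v.1, hv⟩).2.2⟩
      · -- key f = J'
        show key f = J'
        apply Finset.ext
        intro w
        rw [hkeymem f w]
        constructor
        · rintro ⟨hwJ, hwI, hfw⟩
          by_contra hwJ'
          have hwP : w ∈ P \ J' := Finset.mem_sdiff.mpr ⟨hJP hwJ, hwJ'⟩
          rw [hfp ⟨w, hwI⟩ hwP] at hfw
          rcases hdich _ (hg.2 ⟨w, hwP⟩).1 with ⟨-, hnot⟩ | ⟨-, hnot⟩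
          · exact hnot hfw
          · exact hnot (hg.2 ⟨w, hwP⟩).2.1
        · intro hwJ'
          have hwJ : w ∈ J := hJ'sub hwJ'
          have hwI : w ∈ I := hJI hwJ
          have hwnP : ¬ w ∈ P \ J' := fun hp => (Finset.mem_sdiff.mp hp).2 hwJ'
          have hwQ : w ∈ Q \ (J \ J') := (hcover w hwI).resolve_left hwnP
          refine ⟨hwJ, hwI, ?_⟩
          rw [hfq ⟨w, hwI⟩ hwQ]
          exact (hh.2 ⟨w, hwQ⟩).2.1
      · -- Φ f = (g, h)
        have h1 : (Φ f).1 = g := by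
          funext v
          exact hfp ⟨v.1, hPJI v.1 v.2⟩ v.2
        have h2 : (Φ f).2 = h := by
          funext v
          exact hfq ⟨v.1, hQJI v.1 v.2⟩ v.2
        calc Φ f = ((Φ f).1, (Φ f).2) := rfl
        _ = (g, h) := by rw [h1, h2]
  rw [← hbij.image_eq, Set.ncard_image_of_injOn hbij.injOn]


end Frieze
end
end

section
/- Let T be a triangulation of a once-punctured disc and i, j boundary vertices with j ≠ i+1. Then the restriction of T to the truncated unpunctured region S_{ij} (cut off by the arc D_{ij}, containing the boundary arc from i clockwise to j) can be extended to a triangulation of an unpunctured disc with a possibly different set of marked points, with the puncture removed. -/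
noncomputable section
open scoped Classical

namespace Frieze

/-- Arcs of the once-punctured disc with boundary vertices `ZMod N` (clockwise) and
puncture `0` : `Sum.inl (i, d)` (with `2 ≤ d ≤ N`) is the arc `D_{i,i+d}` running
from `i` clockwise to `i + d`, leaving the puncture on the other side (`d = N`
gives the loop `D_{ii}` around the puncture); `Sum.inr i` is the central arc
`D_{i0}` joining `i` to the puncture. -/
abbrev PArc (N : ℕ) := (ZMod N × ℕ) ⊕ ZMod N

def PArcValid (N : ℕ) : PArc N → Prop
  | Sum.inl p => 2 ≤ p.2 ∧ p.2 ≤ N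
  | Sum.inr _ => True

/-- Two arcs of the punctured disc cross iff their lifts to the universal cover
(where the arc `D_{i,i+d}` lifts to the intervals `[ĩ, ĩ + d]` and a central arc
to a vertical ray) strictly interleave. -/
def PCross {N : ℕ} : PArc N → PArc N → Prop
  | Sum.inl p, Sum.inl q =>
      (0 < (q.1 - p.1).val ∧ (q.1 - p.1).val < p.2 ∧ p.2 < (q.1 - p.1).val + q.2) ∨
      (0 < (p.1 - q.1).val ∧ (p.1 - q.1).val < q.2 ∧ q.2 < (p.1 - q.1).val + p.2)
  | Sum.inl p, Sum.inr k => 0 < (k - p.1).val ∧ (k - p.1).val < p.2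
  | Sum.inr k, Sum.inl p => 0 < (k - p.1).val ∧ (k - p.1).val < p.2
  | Sum.inr _, Sum.inr _ => False

/-- An (ideal) triangulation of the once-punctured disc with `N` marked points on
the boundary: a maximal collection of pairwise noncrossing arcs. -/
structure PTriang (N : ℕ) where
  arcs : Finset (PArc N)
  valid : ∀ a ∈ arcs, PArcValid N a
  noncross : ∀ a ∈ arcs, ∀ b ∈ arcs, ¬ PCross a b
  maximal : ∀ a, PArcValid N a → (∀ b ∈ arcs, ¬ PCross a b) → a ∈ arcs

/-- The arc `D_{ij}` (ordered pair, `j ≠ i + 1`); `D_{ii}` is the loop at `i`. -/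
def arcD {N : ℕ} (i j : ZMod N) : PArc N :=
  Sum.inl (i, if j = i then N else (j - i).val)

/-- The central arc `D_{i0}`. -/
def centralD {N : ℕ} (i : ZMod N) : PArc N := Sum.inr i

/-- Ideal triangles of the punctured disc: `Sum.inl (a, p, q)` is the triangle
with corners `a`, `a+p`, `a+p+q` and sides of clockwise lengths `p`, `q` and
`p + q` (when `p + q = N` this is the triangle with sides `D_{a,a+p}`, `D_{a+p,a}`
and the loop `D_{aa}`); `Sum.inr (k, m)` is the triangle incident with the
puncture, with corners `k`, `k+m`, sides the central arcs at `k` and `k+m` and the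
side `D_{k,k+m}` (for `m = N` this is the self-folded triangle). -/
abbrev PTri (N : ℕ) := (ZMod N × ℕ × ℕ) ⊕ (ZMod N × ℕ)

/-- The segment from `a` to `a + d`, `d` steps clockwise, may serve as the side of
a triangle: it is a boundary edge (`d = 1`) or an arc of `T`. -/
def PSide {N : ℕ} (T : PTriang N) (a : ZMod N) (d : ℕ) : Prop :=
  d = 1 ∨ Sum.inl (a, d) ∈ T.arcs

def IsPTri {N : ℕ} (T : PTriang N) : PTri N → Prop
  | Sum.inl t => 1 ≤ t.2.1 ∧ 1 ≤ t.2.2 ∧ t.2.1 + t.2.2 ≤ N ∧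
      PSide T t.1 t.2.1 ∧ PSide T (t.1 + (t.2.1 : ZMod N)) t.2.2 ∧ PSide T t.1 (t.2.1 + t.2.2)
  | Sum.inr t => 1 ≤ t.2 ∧ t.2 ≤ N ∧ Sum.inr t.1 ∈ T.arcs ∧
      Sum.inr (t.1 + (t.2 : ZMod N)) ∈ T.arcs ∧ PSide T t.1 t.2

/-- Incidence of a vertex of the punctured disc (`none` is the puncture) with an
ideal triangle. -/
def PInc {N : ℕ} : Option (ZMod N) → PTri N → Prop
  | some w, Sum.inl t =>
      w = t.1 ∨ w = t.1 + (t.2.1 : ZMod N) ∨ w = t.1 + ((t.2.1 + t.2.2 : ℕ) : ZMod N)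
  | none, Sum.inl _ => False
  | some w, Sum.inr t => w = t.1 ∨ w = t.1 + (t.2 : ZMod N)
  | none, Sum.inr _ => True

/-- `m_{ii}` : the number of matchings between all boundary vertices except `i`
together with the puncture, and the triangles of `T`. -/
def mLoop {N : ℕ} (T : PTriang N) (i : ZMod N) : ℕ :=
  Set.ncard {f : {v : Option (ZMod N) // v ≠ some i} → PTri N |
    Function.Injective f ∧ ∀ v, IsPTri T (f v) ∧ PInc v.1 (f v)}

/-- `d_0` : the number of triangles of `T` incident with the puncture. -/
def dZero {N : ℕ} (T : PTriang N) : ℕ :=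
  Set.ncard {t : PTri N | IsPTri T t ∧ PInc none t}

/-- Lifts of ideal triangles to the universal cover (`ℤ` lifts the boundary
vertices); distinct lifts of a triangle meeting a truncated disc `S_{ij}` are
exactly the connected regions into which the triangle is split there. -/
abbrev LTri := (ℤ × ℕ × ℕ) ⊕ (ℤ × ℕ)

def LProj {N : ℕ} : LTri → PTri N
  | Sum.inl t => Sum.inl ((t.1 : ZMod N), t.2.1, t.2.2)
  | Sum.inr t => Sum.inr ((t.1 : ZMod N), t.2)

/-- The corners of a lifted triangle. -/
def LCorner : LTri → ℤ → Prop
  | Sum.inl t, v => v = t.1 ∨ v = t.1 + t.2.1 ∨ v = t.1 + t.2.1 + t.2.2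
  | Sum.inr t, v => v = t.1 ∨ v = t.1 + t.2

/-- The lifted triangle lies (horizontally) within `[lo, hi]`. -/
def LIn (lo hi : ℤ) : LTri → Prop
  | Sum.inl t => lo ≤ t.1 ∧ t.1 + t.2.1 + t.2.2 ≤ hi
  | Sum.inr t => lo ≤ t.1 ∧ t.1 + t.2 ≤ hi

/-- The clockwise span of the arc `D_{ij}` (`N` for the loop `D_{ii}`). -/
def spanD {N : ℕ} (i j : ZMod N) : ℕ := if j = i then N else (j - i).val

/-- The lifts of the boundary vertices lying strictly between `i` and `j`
(clockwise), i.e. the vertices of the truncated disc `S_{ij}` other than `i, j`. -/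
def interiorIcc {N : ℕ} (i j : ZMod N) : Finset ℤ :=
  Finset.Icc ((i.val : ℤ) + 1) ((i.val : ℤ) + (spanD i j : ℤ) - 1)

/-- The number of matchings between a set `I` of lifted boundary vertices of a
truncated disc and the triangles and regions of the restricted triangulation:
injective allocations, to each vertex, of a lift of a triangle of `T` having it
as a corner. -/
def mArcOn {N : ℕ} (T : PTriang N) (I : Finset ℤ) : ℕ :=
  Set.ncard {f : I → LTri | Function.Injective f ∧
    ∀ v : I, IsPTri T (LProj (f v)) ∧ LCorner (f v) v.1}

/-- `m_{ij}` (for `j ≠ i, i+1`) : the number of matchings between the vertices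
strictly between `i` and `j` clockwise and the restriction of `T` to `S_{ij}`. -/
def mArc {N : ℕ} (T : PTriang N) (i j : ZMod N) : ℕ :=
  mArcOn T (interiorIcc i j)

/-- The matching number attached to the arc `D_{ij}` : `m_{ii}` is the matching
number of the loop `D_{ii}`, and by convention `m_{i,i+1} = 1`. -/
def mNum {N : ℕ} (T : PTriang N) (i j : ZMod N) : ℕ :=
  if j = i then mLoop T i else if j = i + 1 then 1 else mArc T i j

/-- The lift of the nearest weakly-anticlockwise neighbour `k` of `i` with
`D_{k0} ∈ T` (the anticlockwise end of the cut-open disc `P(i)`). -/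
def kLift {N : ℕ} (T : PTriang N) (i : ZMod N) : ℤ :=
  WithBot.unbotD 0 ((Finset.Icc ((i.val : ℤ) - N + 1) (i.val : ℤ)).filter
    (fun t : ℤ => (Sum.inr ((t : ZMod N)) : PArc N) ∈ T.arcs)).max

/-- The lift of the nearest strictly-clockwise neighbour `j` of `i` with
`D_{j0} ∈ T` (the clockwise end of the cut-open disc `P(i)`). -/
def jLift {N : ℕ} (T : PTriang N) (i : ZMod N) : ℤ :=
  WithTop.untopD 0 ((Finset.Icc ((i.val : ℤ) + 1) ((i.val : ℤ) + N)).filter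
    (fun t : ℤ => (Sum.inr ((t : ZMod N)) : PArc N) ∈ T.arcs)).min

/-- `m_{i0}` : the number of matchings, in the unpunctured disc `P(i)` obtained by
cutting `S` open along the central arcs nearest to `i`, between all boundary
vertices of `P(i)` other than `i` and the puncture, and the triangles of `T`
lying in `P(i)`. -/
def mCentral {N : ℕ} (T : PTriang N) (i : ZMod N) : ℕ :=
  Set.ncard {f : ((Finset.Icc (kLift T i) (jLift T i)).erase (i.val : ℤ)) → LTri |
    Function.Injective f ∧ ∀ v, IsPTri T (LProj (f v)) ∧
      LIn (kLift T i) (jLift T i) (f v) ∧ LCorner (f v) v.1}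



/-!
Cut the universal cover of the punctured disc along two lifts `lo` and `lo + w` of central arcs
of `T`. No lifted arc crosses them, so the lifted arcs of `T` inside the strip `[lo, lo + w]`,
together with the lifted central arcs inside it, now ending at an apex `lo + w + 1` that replaces
the puncture, triangulate a `(w + 2)`-gon. Lifted triangles with a corner `v` become triangles of
this polygon at `v` (those at the puncture acquire the apex as a corner), bijectively as soon as
`v` is at distance at least `N` from both ends of the strip; hence matching numbers agree.
Taking `w = 6N` puts the whole of `S_{ij}` in that range.
-/

lemma ncard_injective_choices_eq {ι κ α β : Type*} (e : ι ≃ κ) (φ : α → β)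
    {P : ι → α → Prop} {Q : κ → β → Prop}
    (hφ : ∀ i j a b, P i a → P j b → φ a = φ b → a = b)
    (hPQ : ∀ i b, Q (e i) b ↔ ∃ a, P i a ∧ φ a = b) :
    {f : ι → α | Function.Injective f ∧ ∀ i, P i (f i)}.ncard =
      {g : κ → β | Function.Injective g ∧ ∀ k, Q k (g k)}.ncard := by
  refine Set.ncard_congr (fun f _ => φ ∘ f ∘ e.symm) ?_ ?_ ?_
  · rintro f ⟨hinj, hP⟩
    refine ⟨fun k k' h => e.symm.injective (hinj (hφ _ _ _ _ (hP _) (hP _) h)), fun k => ?_⟩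
    obtain ⟨i, rfl⟩ := e.surjective k
    exact (hPQ i _).2 ⟨_, hP _, by simp⟩
  · rintro f g ⟨-, hf⟩ ⟨-, hg⟩ h
    funext i
    exact hφ _ _ _ _ (hf i) (hg i) (by simpa using congrFun h (e i))
  · rintro g ⟨hinj, hQ⟩
    choose f hf hfg using fun i => (hPQ i (g (e i))).1 (hQ _)
    refine ⟨f, ⟨fun i j h => e.injective (hinj (by rw [← hfg, ← hfg, h])), hf⟩, ?_⟩
    funext k
    simp [hfg]

def ICross (p q : ℤ × ℤ) : Prop :=
  (p.1 < q.1 ∧ q.1 < p.2 ∧ p.2 < q.2) ∨ (q.1 < p.1 ∧ p.1 < q.2 ∧ q.2 < p.2)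

section Polygon

variable {M : ℕ} {lo : ℤ}

/-- The vertex `t - lo` of the `M`-gon: integers `lo, …, lo + M - 1` label its vertices in
clockwise order. -/
def vtx (M : ℕ) (lo t : ℤ) : ZMod M := ((t - lo : ℤ) : ZMod M)

lemma vtx_add (t : ℤ) (n : ℕ) : vtx M lo (t + n) = vtx M lo t + n := by
  unfold vtx; push_cast; ring

lemma vtx_add_one (t : ℤ) : vtx M lo (t + 1) = vtx M lo t + 1 := by
  exact_mod_cast vtx_add t 1

lemma vtx_add_card (t : ℤ) : vtx M lo (t + M) = vtx M lo t := by
  rw [vtx_add, ZMod.natCast_self, add_zero]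

lemma eq_of_vtx_eq {s t : ℤ} (h : vtx M lo s = vtx M lo t) (hst : s < t + M)
    (hts : t < s + M) : s = t := by
  rw [vtx, vtx, ZMod.intCast_eq_intCast_iff_dvd_sub] at h
  obtain ⟨k, hk⟩ := h
  rcases lt_trichotomy k 0 with hk0 | rfl | hk0 <;> nlinarith

lemma val_vtx [NeZero M] {t : ℤ} (h₁ : lo ≤ t) (h₂ : t < lo + M) :
    ((vtx M lo t).val : ℤ) = t - lo := by
  rw [vtx, ZMod.val_intCast, Int.emod_eq_of_lt (by omega) (by omega)]

lemma exists_vtx_eq [NeZero M] (x : ZMod M) : ∃ t, lo ≤ t ∧ t < lo + M ∧ vtx M lo t = x :=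
  ⟨lo + x.val, by omega, by have := ZMod.val_lt x; omega, by simp [vtx]⟩

lemma val_vtx_sub [NeZero M] {s t : ℤ} (hs₁ : lo ≤ s) (hs₂ : s < lo + M) (ht₁ : lo ≤ t)
    (ht₂ : t < lo + M) :
    ((vtx M lo s - vtx M lo t).val : ℤ) = if t ≤ s then s - t else s - t + M := by
  split_ifs with hts
  · have : vtx M lo s - vtx M lo t = vtx M t s := by simp [vtx]
    rw [this, val_vtx] <;> omega
  · have : vtx M lo s - vtx M lo t = vtx M (t - M) s := by simp [vtx]
    rw [this, val_vtx] <;> omega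

lemma dCross_vtx_iff [NeZero M] {a b a' b' : ℤ} (ha : lo ≤ a) (hab : a < b) (hb : b < lo + M)
    (ha' : lo ≤ a') (hab' : a' < b') (hb' : b' < lo + M) :
    DCross (vtx M lo a, vtx M lo b) (vtx M lo a', vtx M lo b') ↔ ICross (a, b) (a', b') := by
  simp only [DCross, Btw, ICross]
  zify
  rw [val_vtx_sub ha' (by omega) ha (by omega), val_vtx_sub (by omega) hb ha (by omega),
    val_vtx_sub (by omega) hb' (by omega) hb, val_vtx_sub ha (by omega) (by omega) hb,
    val_vtx_sub (by omega) hb' ha (by omega), val_vtx_sub ha' (by omega) (by omega) hb]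
  split_ifs <;> omega

lemma isDiag_vtx_iff [NeZero M] {a b : ℤ} (ha : lo ≤ a) (hab : a < b) (hb : b < lo + M) :
    IsDiag M (vtx M lo a, vtx M lo b) ↔ a + 2 ≤ b ∧ ¬ (a = lo ∧ b = lo + M - 1) := by
  simp only [IsDiag, ← vtx_add_one]
  constructor
  · rintro ⟨-, h₁, h₂⟩
    refine ⟨?_, fun h => h₂ ?_⟩
    · by_contra h
      exact h₁ (by rw [show b = a + 1 by omega])
    · rw [h.1, h.2, show lo + M - 1 + 1 = lo + M by ring, vtx_add_card]
  · rintro ⟨h₁, h₂⟩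
    refine ⟨fun h => ?_, fun h => ?_, fun h => ?_⟩
    · have := eq_of_vtx_eq h (by omega) (by omega); omega
    · have := eq_of_vtx_eq h (by omega) (by omega); omega
    · rw [← vtx_add_card] at h
      have := eq_of_vtx_eq h (by omega) (by omega); omega

lemma isDiag_swap {x y : ZMod M} : IsDiag M (x, y) ↔ IsDiag M (y, x) := by
  simp only [IsDiag]
  exact ⟨fun ⟨h₁, h₂, h₃⟩ => ⟨Ne.symm h₁, h₃, h₂⟩, fun ⟨h₁, h₂, h₃⟩ => ⟨Ne.symm h₁, h₃, h₂⟩⟩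

lemma dCross_swap {x y : ZMod M} {q : ZMod M × ZMod M} : DCross (x, y) q ↔ DCross (y, x) q := by
  simp only [DCross]
  exact ⟨fun h => h.symm.imp And.symm And.symm, fun h => h.symm.imp And.symm And.symm⟩

/-- `C` is a triangulation of the `M`-gon with vertices `lo, …, lo + M - 1`, each diagonal
recorded as `(a, b)` with `a < b`. -/
structure IsChordTriang (M : ℕ) (lo : ℤ) (C : Finset (ℤ × ℤ)) : Prop where
  valid : ∀ p ∈ C, lo ≤ p.1 ∧ p.1 + 2 ≤ p.2 ∧ p.2 < lo + M ∧ ¬ (p.1 = lo ∧ p.2 = lo + M - 1)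
  noncross : ∀ p ∈ C, ∀ q ∈ C, ¬ ICross p q
  maximal : ∀ a b, lo ≤ a → a + 2 ≤ b → b < lo + M → ¬ (a = lo ∧ b = lo + M - 1) →
    (∀ q ∈ C, ¬ ICross (a, b) q) → (a, b) ∈ C

namespace IsChordTriang

variable [NeZero M] {C : Finset (ℤ × ℤ)} (hC : IsChordTriang M lo C)
include hC

lemma mem_of_forall_not_dCross {s t : ℤ} (hs : lo ≤ s) (hst : s < t) (ht : t < lo + M)
    (hdiag : IsDiag M (vtx M lo s, vtx M lo t))
    (hnc : ∀ q ∈ C, ¬ DCross (vtx M lo s, vtx M lo t) (vtx M lo q.1, vtx M lo q.2)) :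
    (s, t) ∈ C := by
  obtain ⟨h₁, h₂⟩ := (isDiag_vtx_iff hs hst ht).1 hdiag
  refine hC.maximal s t hs h₁ ht h₂ fun q hq hcross => hnc q hq ?_
  obtain ⟨hq₁, hq₂, hq₃, -⟩ := hC.valid q hq
  exact (dCross_vtx_iff hs hst ht hq₁ (by omega) hq₃).2 hcross

def toTriang : Triang M where
  diag := C.image fun p => (vtx M lo p.1, vtx M lo p.2)
  valid := by
    simp only [Finset.mem_image]
    rintro _ ⟨p, hp, rfl⟩
    obtain ⟨h₁, h₂, h₃, h₄⟩ := hC.valid p hp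
    exact (isDiag_vtx_iff h₁ (by omega) h₃).2 ⟨h₂, h₄⟩
  nodupSym := by
    simp only [Finset.mem_image]
    rintro _ ⟨p, hp, rfl⟩ ⟨q, hq, h⟩
    obtain ⟨h₁, h₂⟩ := Prod.ext_iff.1 h
    obtain ⟨hp₁, hp₂, hp₃, -⟩ := hC.valid p hp
    obtain ⟨hq₁, hq₂, hq₃, -⟩ := hC.valid q hq
    have := eq_of_vtx_eq h₁ (by omega) (by omega)
    have := eq_of_vtx_eq h₂ (by omega) (by omega)
    omega
  noncross := by
    simp only [Finset.mem_image]
    rintro _ ⟨p, hp, rfl⟩ _ ⟨q, hq, rfl⟩ hcross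
    obtain ⟨hp₁, hp₂, hp₃, -⟩ := hC.valid p hp
    obtain ⟨hq₁, hq₂, hq₃, -⟩ := hC.valid q hq
    exact hC.noncross p hp q hq
      ((dCross_vtx_iff hp₁ (by omega) hp₃ hq₁ (by omega) hq₃).1 hcross)
  maximal := by
    rintro ⟨x, y⟩ hdiag hnc
    dsimp only at hnc ⊢
    rw [Finset.forall_mem_image] at hnc
    simp only [Finset.mem_image]
    obtain ⟨s, hs₁, hs₂, rfl⟩ := exists_vtx_eq (lo := lo) x
    obtain ⟨t, ht₁, ht₂, rfl⟩ := exists_vtx_eq (lo := lo) y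
    rcases lt_trichotomy s t with hst | rfl | hts
    · exact .inl ⟨(s, t), hC.mem_of_forall_not_dCross hs₁ hst ht₂ hdiag hnc, rfl⟩
    · exact absurd rfl hdiag.1
    · refine .inr ⟨(t, s), hC.mem_of_forall_not_dCross ht₁ hts hs₂ (isDiag_swap.1 hdiag)
        fun _ hq h => hnc hq (dCross_swap.2 h), rfl⟩

lemma memD_vtx_iff {a b : ℤ} (ha : lo ≤ a) (hab : a < b) (hb : b < lo + M) :
    MemD hC.toTriang (vtx M lo a) (vtx M lo b) ↔ (a, b) ∈ C := by
  simp only [MemD, toTriang, Finset.mem_image, Prod.ext_iff]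
  constructor
  · rintro (⟨q, hq, h₁, h₂⟩ | ⟨q, hq, h₁, h₂⟩) <;> obtain ⟨hq₁, hq₂, hq₃, -⟩ := hC.valid q hq
    · rwa [← eq_of_vtx_eq h₁ (by omega) (by omega), ← eq_of_vtx_eq h₂ (by omega) (by omega)]
    · have := eq_of_vtx_eq h₁ (by omega) (by omega)
      have := eq_of_vtx_eq h₂ (by omega) (by omega)
      omega
  · exact fun h => .inl ⟨(a, b), h, rfl, rfl⟩

lemma joined_vtx_iff {x y : ℤ} (hx : lo ≤ x) (hxy : x < y) (hy : y < lo + M) :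
    Joined hC.toTriang (vtx M lo x) (vtx M lo y) ↔
      y = x + 1 ∨ (x = lo ∧ y = lo + M - 1) ∨ (x, y) ∈ C := by
  rw [Joined, hC.memD_vtx_iff hx hxy hy, ← vtx_add_one, ← vtx_add_one, ← vtx_add_card x]
  refine or_congr ⟨fun h => eq_of_vtx_eq h (by omega) (by omega), by rintro rfl; rfl⟩
    (or_congr_left ⟨fun h => ?_, fun ⟨h₁, h₂⟩ => by rw [h₁, h₂]; ring_nf⟩)
  have := eq_of_vtx_eq h (by omega) (by omega)
  omega

end IsChordTriang

lemma joined_comm {T : Triang M} {x y : ZMod M} : Joined T x y ↔ Joined T y x := by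
  simp only [Joined, MemD]
  tauto

lemma uSide_iff_joined {T : Triang M} {x : ZMod M} {d : ℕ} (hd : 1 ≤ d) (hdM : d + 1 < M) :
    USide T x d ↔ Joined T x (x + d) := by
  have h₁ : x + d = x + 1 ↔ d = 1 := by
    rw [add_right_inj, ← Nat.cast_one, ZMod.natCast_eq_natCast_iff', Nat.mod_eq_of_lt (by omega),
      Nat.mod_eq_of_lt (by omega)]
  have h₂ : x ≠ x + d + 1 := by
    rw [add_assoc, Ne, left_eq_add, ← Nat.cast_one, ← Nat.cast_add, ZMod.natCast_eq_zero_iff]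
    exact fun h => absurd (Nat.le_of_dvd (by omega) h) (by omega)
  rw [USide, Joined, h₁, eq_false h₂, false_or]

lemma isUTri_vtx_iff [NeZero M] (T : Triang M) {a : ℤ} {p q : ℕ} (hp : 1 ≤ p) (hq : 1 ≤ q)
    (ha : lo ≤ a) (hpq : a + p + q < lo + M) :
    IsUTri T (vtx M lo a, p, q) ↔ Joined T (vtx M lo a) (vtx M lo (a + p)) ∧
      Joined T (vtx M lo (a + p)) (vtx M lo (a + p + q)) ∧
      Joined T (vtx M lo a) (vtx M lo (a + p + q)) := by
  have hapq : a + p + q = a + (p + q : ℕ) := by push_cast; ring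
  have hwrap : vtx M lo (a + p + q) + (M - p - q : ℕ) = vtx M lo a := by
    rw [← vtx_add, show a + p + q + ((M - p - q : ℕ) : ℤ) = a + M by omega, vtx_add_card]
  simp only [IsUTri, ← vtx_add, ← hapq]
  rw [uSide_iff_joined hp (by omega), uSide_iff_joined hq (by omega),
    uSide_iff_joined (by omega) (by omega), hwrap, joined_comm (x := vtx M lo (a + p + q)),
    ← vtx_add, ← vtx_add]
  have := val_vtx (M := M) ha (by omega)
  have := val_vtx (M := M) (lo := lo) (t := a + p) (by omega) (by omega)
  have := val_vtx (M := M) (lo := lo) (t := a + p + q) (by omega) (by omega)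
  constructor
  · exact fun h => ⟨h.2.2.2.1, h.2.2.2.2.1, h.2.2.2.2.2.1⟩
  · exact fun h => ⟨hp, hq, by omega, h.1, h.2.1, h.2.2, by omega, by omega⟩

/-- The canonicity conditions in `IsUTri` say that the triangle does not wrap around past `0`. -/
lemma exists_vtx_of_isUTri [NeZero M] {T : Triang M} {x : ZMod M} {p q : ℕ}
    (h : IsUTri T (x, p, q)) : ∃ a, lo ≤ a ∧ a + p + q < lo + M ∧ vtx M lo a = x := by
  obtain ⟨-, -, hpq, -, -, -, -, hcanon⟩ := h
  dsimp only at hpq hcanon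
  have := ZMod.val_lt x
  refine ⟨lo + x.val, by omega, ?_, by simp [vtx]⟩
  rw [ZMod.val_add, ZMod.val_natCast, Nat.mod_eq_of_lt (a := p + q) (by omega)] at hcanon
  by_contra hwrap
  rw [Nat.mod_eq_sub_mod (by omega), Nat.mod_eq_of_lt (by omega)] at hcanon
  omega

end Polygon

section Lifts

variable {N : ℕ} [NeZero N]

lemma val_intCast_sub {a b : ℤ} (h₀ : b < a) (h₁ : a < b + N) :
    (((a : ZMod N) - b).val : ℤ) = a - b := by
  rw [← Int.cast_sub, ZMod.val_intCast, Int.emod_eq_of_lt (by omega) (by omega)]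

lemma intCast_add_val_sub (u : ℤ) (x : ZMod N) : ((u + ((x - u).val : ℤ) : ℤ) : ZMod N) = x := by
  simp

lemma intCast_sub_val_sub (u : ℤ) (x : ZMod N) :
    ((u - (((u : ZMod N) - x).val : ℤ) : ℤ) : ZMod N) = x := by
  simp

lemma pCross_inl_inr_iff {u : ℤ} {e : ℕ} (he : e ≤ N) {k : ZMod N} :
    PCross (Sum.inl ((u : ZMod N), e)) (Sum.inr k) ↔
      ∃ t : ℤ, (t : ZMod N) = k ∧ u < t ∧ t < u + e := by
  simp only [PCross]
  constructor
  · rintro ⟨h₁, h₂⟩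
    exact ⟨_, intCast_add_val_sub u k, by omega, by omega⟩
  · rintro ⟨t, rfl, h₁, h₂⟩
    have := val_intCast_sub (N := N) h₁ (by omega)
    exact ⟨by omega, by omega⟩

lemma pCross_inr_inl_iff {t : ℤ} {x : ZMod N} {d : ℕ} (hd : d ≤ N) :
    PCross (Sum.inr (t : ZMod N)) (Sum.inl (x, d)) ↔
      ∃ a : ℤ, (a : ZMod N) = x ∧ a < t ∧ t < a + d := by
  simp only [PCross]
  constructor
  · rintro ⟨h₁, h₂⟩
    exact ⟨_, intCast_sub_val_sub t x, by omega, by omega⟩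
  · rintro ⟨a, rfl, h₁, h₂⟩
    have := val_intCast_sub (N := N) h₁ (by omega)
    exact ⟨by omega, by omega⟩

lemma pCross_inl_inl_iff {u : ℤ} {e d : ℕ} (he : e ≤ N) (hd : d ≤ N) {a : ZMod N} :
    PCross (Sum.inl ((u : ZMod N), e)) (Sum.inl (a, d)) ↔
      ∃ a' : ℤ, (a' : ZMod N) = a ∧ ICross (u, u + e) (a', a' + d) := by
  simp only [PCross, ICross]
  constructor
  · rintro (⟨h₁, h₂, h₃⟩ | ⟨h₁, h₂, h₃⟩)
    · exact ⟨_, intCast_add_val_sub u a, .inl ⟨by omega, by omega, by omega⟩⟩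
    · exact ⟨_, intCast_sub_val_sub u a, .inr ⟨by omega, by omega, by omega⟩⟩
  · rintro ⟨a', rfl, ⟨h₁, h₂, h₃⟩ | ⟨h₁, h₂, h₃⟩⟩
    · have := val_intCast_sub (N := N) h₁ (by omega)
      exact .inl ⟨by omega, by omega, by omega⟩
    · have := val_intCast_sub (N := N) h₁ (by omega)
      exact .inr ⟨by omega, by omega, by omega⟩

end Lifts

namespace PTriang

variable {N : ℕ} (T : PTriang N)

lemma inl_mem_bounds {x : ZMod N} {d : ℕ} (h : (Sum.inl (x, d) : PArc N) ∈ T.arcs) :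
    2 ≤ d ∧ d ≤ N :=
  T.valid _ h

/-- Otherwise, by maximality, every central arc crosses some arc of `T`; the arc crossing the
central arc at the start of a longest arc would cross that longest arc. -/
lemma exists_central : ∃ k, (Sum.inr k : PArc N) ∈ T.arcs := by
  by_contra! hnone
  have hcrossed (k : ZMod N) :
      ∃ p, (Sum.inl p : PArc N) ∈ T.arcs ∧ PCross (Sum.inr k) (Sum.inl p) := by
    by_contra! hno
    refine hnone k (T.maximal _ trivial fun b hb => ?_)
    rcases b with p | k'
    exacts [hno p hb, id]
  obtain ⟨p₀, hp₀, -⟩ := hcrossed 0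
  obtain ⟨b, hb, hmax⟩ := T.arcs.exists_max_image (Sum.elim (fun p : ZMod N × ℕ => p.2) 0) ⟨_, hp₀⟩
  rcases b with p | k
  · obtain ⟨q, hq, h₁, h₂⟩ := hcrossed p.1
    have hle : q.2 ≤ p.2 := by simpa using hmax _ hq
    exact T.noncross _ hq _ hb (.inl ⟨h₁, h₂, by omega⟩)
  · exact hnone k hb

lemma lIn_of_lCorner {l : LTri} {v : ℤ} (hl : IsPTri T (LProj l)) (hv : LCorner l v) :
    LIn (v - N) (v + N) l := by
  rcases l with ⟨a, p, q⟩ | ⟨k, m⟩ <;> dsimp only [LProj, IsPTri, LCorner, LIn] at hl hv ⊢ <;>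
    omega

variable [NeZero N]

lemma pSide_le {x : ZMod N} {d : ℕ} (h : PSide T x d) : d ≤ N := by
  rcases h with rfl | h
  exacts [NeZero.one_le, (T.inl_mem_bounds h).2]

lemma exists_central_lift (b : ℤ) :
    ∃ t, b - N < t ∧ t ≤ b ∧ (Sum.inr (t : ZMod N) : PArc N) ∈ T.arcs := by
  obtain ⟨k, hk⟩ := T.exists_central
  obtain ⟨c, rfl⟩ : ∃ c : ℤ, (c : ZMod N) = k := ⟨k.val, by simp⟩
  have hN : (0 : ℤ) < N := by exact_mod_cast NeZero.pos N
  refine ⟨b - (b - c) % N, by linarith [Int.emod_lt_of_pos (b - c) hN],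
    by linarith [Int.emod_nonneg (b - c) hN.ne'], ?_⟩
  convert hk using 2
  rw [ZMod.intCast_eq_intCast_iff_dvd_sub]
  exact ⟨-((b - c) / N), by linarith [Int.emod_add_mul_ediv (b - c) N]⟩

lemma not_central_between {u t : ℤ} {e : ℕ}
    (harc : (Sum.inl ((u : ZMod N), e) : PArc N) ∈ T.arcs)
    (hcen : (Sum.inr (t : ZMod N) : PArc N) ∈ T.arcs) : ¬ (u < t ∧ t < u + e) := fun h =>
  T.noncross _ harc _ hcen <| (pCross_inl_inr_iff (T.inl_mem_bounds harc).2).2 ⟨t, rfl, h⟩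

lemma not_iCross_arcs {u u' : ℤ} {e e' : ℕ}
    (harc : (Sum.inl ((u : ZMod N), e) : PArc N) ∈ T.arcs)
    (harc' : (Sum.inl ((u' : ZMod N), e') : PArc N) ∈ T.arcs) :
    ¬ ICross (u, u + e) (u', u' + e') := fun h =>
  T.noncross _ harc _ harc' <| (pCross_inl_inl_iff (T.inl_mem_bounds harc).2
    (T.inl_mem_bounds harc').2).2 ⟨u', rfl, h⟩

lemma central_mem_of_not_between {t : ℤ}
    (h : ∀ (a : ℤ) (d : ℕ), (Sum.inl ((a : ZMod N), d) : PArc N) ∈ T.arcs → ¬ (a < t ∧ t < a + d)) :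
    (Sum.inr (t : ZMod N) : PArc N) ∈ T.arcs := by
  refine T.maximal _ trivial fun b hb hcross => ?_
  rcases b with ⟨x, d⟩ | k
  · obtain ⟨a, rfl, hat⟩ := (pCross_inr_inl_iff (T.inl_mem_bounds hb).2).1 hcross
    exact h a d hb hat
  · exact hcross

lemma arc_mem_of_not_cross {u : ℤ} {e : ℕ} (he₁ : 2 ≤ e) (he₂ : e ≤ N)
    (hcen : ∀ t : ℤ, (Sum.inr (t : ZMod N) : PArc N) ∈ T.arcs → ¬ (u < t ∧ t < u + e))
    (harc : ∀ (a : ℤ) (d : ℕ), (Sum.inl ((a : ZMod N), d) : PArc N) ∈ T.arcs →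
      ¬ ICross (u, u + e) (a, a + d)) :
    (Sum.inl ((u : ZMod N), e) : PArc N) ∈ T.arcs := by
  refine T.maximal _ ⟨he₁, he₂⟩ fun b hb hcross => ?_
  rcases b with ⟨x, d⟩ | k
  · obtain ⟨a, rfl, hcr⟩ := (pCross_inl_inl_iff he₂ (T.inl_mem_bounds hb).2).1 hcross
    exact harc a d hb hcr
  · obtain ⟨t, rfl, hut⟩ := (pCross_inl_inr_iff he₂).1 hcross
    exact hcen t hb hut

end PTriang

section Strip

variable {N : ℕ} (T : PTriang N) (lo : ℤ) (w : ℕ)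

/-- Diagonals of the `(w + 2)`-gon obtained from the strip `[lo, lo + w]` of the universal cover,
with an apex `lo + w + 1` standing for the puncture: lifts of arcs of `T` inside the strip, and
lifts of central arcs of `T`, which end at the apex. -/
def stripChords : Finset (ℤ × ℤ) :=
  (Finset.Icc lo (lo + w + 1) ×ˢ Finset.Icc lo (lo + w + 1)).filter fun p =>
    (∃ d : ℕ, p.2 = p.1 + d ∧ p.1 + d ≤ lo + w ∧ (Sum.inl ((p.1 : ZMod N), d) : PArc N) ∈ T.arcs) ∨
    (lo < p.1 ∧ p.1 < lo + w ∧ p.2 = lo + w + 1 ∧ (Sum.inr (p.1 : ZMod N) : PArc N) ∈ T.arcs)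

/-- Lifted triangles as triangles of the strip polygon: a triangle at the puncture gets the apex
`lo + w + 1` as its third corner. -/
def toStripTri : LTri → ZMod (w + 2) × ℕ × ℕ
  | Sum.inl t => (vtx (w + 2) lo t.1, t.2.1, t.2.2)
  | Sum.inr t => (vtx (w + 2) lo t.1, t.2, (lo + w + 1 - (t.1 + t.2)).toNat)

variable {T lo w}

lemma toStripTri_injOn : Set.InjOn (toStripTri lo w) {l | LIn lo (lo + w) l} := by
  rintro (⟨a, p, q⟩ | ⟨a, p⟩) hl (⟨a', p', q'⟩ | ⟨a', p'⟩) hl' h <;>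
    simp only [Set.mem_ofPred_eq, LIn] at hl hl' <;>
    simp only [toStripTri, Prod.mk.injEq] at h <;> obtain ⟨h₁, rfl, h₃⟩ := h <;>
    obtain rfl := eq_of_vtx_eq h₁ (by omega) (by omega)
  · rw [h₃]
  · omega
  · omega
  · rfl

lemma uInc_toStripTri {l : LTri} {v : ℤ} (h : LCorner l v) :
    UInc (vtx (w + 2) lo v) (toStripTri lo w l) := by
  rcases l with ⟨a, p, q⟩ | ⟨k, m⟩ <;> simp only [LCorner] at h <;>
    simp only [UInc, toStripTri, ← vtx_add, Nat.cast_add, ← add_assoc]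
  · rcases h with rfl | rfl | rfl <;> simp
  · rcases h with rfl | rfl <;> simp

lemma mem_stripChords {p : ℤ × ℤ} : p ∈ stripChords T lo w ↔
    (∃ d : ℕ, p.2 = p.1 + d ∧ lo ≤ p.1 ∧ p.1 + d ≤ lo + w ∧
      (Sum.inl ((p.1 : ZMod N), d) : PArc N) ∈ T.arcs) ∨
    (lo < p.1 ∧ p.1 < lo + w ∧ p.2 = lo + w + 1 ∧ (Sum.inr (p.1 : ZMod N) : PArc N) ∈ T.arcs) := by
  simp only [stripChords, Finset.mem_filter, Finset.mem_product, Finset.mem_Icc]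
  constructor
  · rintro ⟨⟨⟨h₁, -⟩, -⟩, ⟨d, hd, h⟩ | h⟩
    exacts [.inl ⟨d, hd, h₁, h⟩, .inr h]
  · rintro (⟨d, hd, h₁, h₂, h⟩ | ⟨h₁, h₂, h₃, h⟩)
    · exact ⟨by omega, .inl ⟨d, hd, h₂, h⟩⟩
    · exact ⟨by omega, .inr ⟨h₁, h₂, h₃, h⟩⟩

lemma mem_stripChords_arc {x : ℤ} {d : ℕ} (hx : lo ≤ x) (hd : x + d ≤ lo + w) :
    (x, x + d) ∈ stripChords T lo w ↔ (Sum.inl ((x : ZMod N), d) : PArc N) ∈ T.arcs := by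
  rw [mem_stripChords]
  constructor
  · rintro (⟨d', hd', -, -, h⟩ | ⟨-, -, h, -⟩)
    · rwa [show d = d' by dsimp only at hd'; omega]
    · dsimp only at h; omega
  · exact fun h => .inl ⟨d, rfl, hx, hd, h⟩

lemma mem_stripChords_apex {x : ℤ} (hx₁ : lo < x) (hx₂ : x < lo + w) :
    (x, lo + w + 1) ∈ stripChords T lo w ↔ (Sum.inr (x : ZMod N) : PArc N) ∈ T.arcs := by
  rw [mem_stripChords]
  constructor
  · rintro (⟨d, hd, -, h, -⟩ | ⟨-, -, -, h⟩)
    · dsimp only at hd h; omega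
    · exact h
  · exact fun h => .inr ⟨hx₁, hx₂, rfl, h⟩

variable [NeZero N] (hlo : (Sum.inr (lo : ZMod N) : PArc N) ∈ T.arcs)
  (hhi : (Sum.inr ((lo + w : ℤ) : ZMod N) : PArc N) ∈ T.arcs)
include hlo hhi

lemma arc_lift_mem_strip {a : ℤ} {d : ℕ} (harc : (Sum.inl ((a : ZMod N), d) : PArc N) ∈ T.arcs)
    (h₁ : lo < a + d) (h₂ : a < lo + w) : lo ≤ a ∧ a + d ≤ lo + w := by
  have := T.not_central_between harc hlo
  have := T.not_central_between harc hhi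
  omega

lemma isChordTriang_stripChords : IsChordTriang (w + 2) lo (stripChords T lo w) where
  valid p hp := by
    rcases mem_stripChords.1 hp with ⟨d, hd, h₁, h₂, h⟩ | ⟨h₁, h₂, h₃, -⟩
    · have := (T.inl_mem_bounds h).1
      push_cast; omega
    · push_cast; omega
  noncross := by
    rintro ⟨x, y⟩ hp ⟨x', y'⟩ hq hcross
    simp only [mem_stripChords] at hp hq
    rcases hp with ⟨d, rfl, -, hd, h⟩ | ⟨-, -, rfl, h⟩ <;>
      rcases hq with ⟨d', rfl, -, hd', h'⟩ | ⟨-, -, rfl, h'⟩ <;> unfold ICross at hcross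
    · exact T.not_iCross_arcs h h' hcross
    · exact T.not_central_between h h' (by omega)
    · exact T.not_central_between h' h (by omega)
    · omega
  maximal a b ha hab hb hbd hnc := by
    push_cast at hb hbd
    have harc (a' : ℤ) (d : ℕ) (h : (Sum.inl ((a' : ZMod N), d) : PArc N) ∈ T.arcs)
        (hinside : a' < lo + w) (hcross : ICross (a, b) (a', a' + d)) : False := by
      unfold ICross at hcross
      obtain ⟨hl, hr⟩ := arc_lift_mem_strip hlo hhi h (by omega) hinside
      exact hnc _ ((mem_stripChords_arc hl hr).2 h) (by unfold ICross; omega)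
    rcases eq_or_lt_of_le (show b ≤ lo + w + 1 by omega) with rfl | hbw
    · refine (mem_stripChords_apex (by omega) (by omega)).2
        (T.central_mem_of_not_between fun a' d h hbet => harc a' d h (by omega) ?_)
      have := arc_lift_mem_strip hlo hhi h (by omega) (by omega)
      exact .inr ⟨hbet.1, hbet.2, by omega⟩
    have hcen (t : ℤ) (ht : (Sum.inr (t : ZMod N) : PArc N) ∈ T.arcs) (hat : a < t)
        (htb : t < b) : False :=
      hnc _ ((mem_stripChords_apex (by omega) (by omega)).2 ht) (.inl ⟨hat, htb, by omega⟩)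
    obtain ⟨e, rfl⟩ : ∃ e : ℕ, b = a + e := ⟨(b - a).toNat, by omega⟩
    have heN : e ≤ N := by
      by_contra! hlong
      obtain ⟨t, ht₁, ht₂, ht⟩ := T.exists_central_lift (a + e - 1)
      exact hcen t ht (by omega) (by omega)
    exact (mem_stripChords_arc ha (by omega)).2 (T.arc_mem_of_not_cross (by omega) heN
      (fun t ht hat => hcen t ht hat.1 hat.2) fun a' d h hcross =>
        harc a' d h (by unfold ICross at hcross; omega) hcross)

def stripTriang : Triang (w + 2) := (isChordTriang_stripChords hlo hhi).toTriang

lemma joined_stripTriang_iff_pSide {x : ℤ} {d : ℕ} (hx : lo ≤ x) (hd₁ : 1 ≤ d)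
    (hd₂ : x + d ≤ lo + w) :
    Joined (stripTriang hlo hhi) (vtx (w + 2) lo x) (vtx (w + 2) lo (x + d)) ↔
      PSide T (x : ZMod N) d := by
  rw [stripTriang, IsChordTriang.joined_vtx_iff _ hx (by omega) (by push_cast; omega),
    mem_stripChords_arc hx hd₂, PSide]
  push_cast
  have hnot : ¬ (x = lo ∧ x + d = lo + (w + 2) - 1) := by omega
  simp only [hnot, false_or, add_right_inj, Nat.cast_eq_one]

lemma joined_stripTriang_apex_iff {x : ℤ} (hx₁ : lo ≤ x) (hx₂ : x ≤ lo + w) :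
    Joined (stripTriang hlo hhi) (vtx (w + 2) lo x) (vtx (w + 2) lo (lo + w + 1)) ↔
      (Sum.inr (x : ZMod N) : PArc N) ∈ T.arcs := by
  rw [stripTriang, IsChordTriang.joined_vtx_iff _ hx₁ (by omega) (by push_cast; omega)]
  rcases eq_or_lt_of_le hx₁ with rfl | hx₁
  · exact iff_of_true (.inr (.inl ⟨rfl, by push_cast; ring⟩)) hlo
  rcases eq_or_lt_of_le hx₂ with rfl | hx₂
  · exact iff_of_true (.inl rfl) hhi
  rw [mem_stripChords_apex hx₁ hx₂]
  exact ⟨fun h => (h.resolve_left (by omega)).resolve_left (by omega), fun h => .inr (.inr h)⟩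

lemma isUTri_toStripTri {l : LTri} (hl : IsPTri T (LProj l)) (hin : LIn lo (lo + w) l) :
    IsUTri (stripTriang hlo hhi) (toStripTri lo w l) := by
  rcases l with ⟨a, p, q⟩ | ⟨k, m⟩ <;> dsimp only [LProj, IsPTri, LIn] at hl hin
  · obtain ⟨hp, hq, -, h₁, h₂, h₃⟩ := hl
    obtain ⟨ha, hpq⟩ := hin
    rw [toStripTri, isUTri_vtx_iff _ hp hq ha (by push_cast; omega),
      joined_stripTriang_iff_pSide hlo hhi ha hp (by omega),
      joined_stripTriang_iff_pSide hlo hhi (by omega) hq hpq, add_assoc, ← Nat.cast_add,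
      joined_stripTriang_iff_pSide hlo hhi ha (by omega) (by push_cast; omega)]
    push_cast
    exact ⟨h₁, h₂, h₃⟩
  · obtain ⟨hm₁, hm₂, hk, hkm, h⟩ := hl
    obtain ⟨hk₁, hk₂⟩ := hin
    rw [toStripTri, isUTri_vtx_iff _ hm₁ (by omega) hk₁ (by push_cast; omega),
      show k + m + ((lo + w + 1 - (k + m)).toNat : ℕ) = lo + w + 1 by omega,
      joined_stripTriang_iff_pSide hlo hhi hk₁ hm₁ hk₂,
      joined_stripTriang_apex_iff hlo hhi (by omega) hk₂,
      joined_stripTriang_apex_iff hlo hhi hk₁ (by omega)]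
    push_cast
    exact ⟨h, hkm, hk⟩

lemma exists_toStripTri_eq {u : ZMod (w + 2) × ℕ × ℕ} {v : ℤ}
    (hu : IsUTri (stripTriang hlo hhi) u) (hinc : UInc (vtx (w + 2) lo v) u) (hv₁ : lo ≤ v)
    (hv₂ : v ≤ lo + w) : ∃ l, IsPTri T (LProj l) ∧ LCorner l v ∧ toStripTri lo w l = u := by
  obtain ⟨x, p, q⟩ := u
  obtain ⟨a, ha, hapq, rfl⟩ := exists_vtx_of_isUTri (lo := lo) hu
  have hp : 1 ≤ p := hu.1
  have hq : 1 ≤ q := hu.2.1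
  push_cast at hapq
  have hcorner : v = a ∨ v = a + p ∨ v = a + p + q := by
    simp only [UInc, ← vtx_add, Nat.cast_add, ← add_assoc] at hinc
    rcases hinc with h | h | h <;> have := eq_of_vtx_eq h (by push_cast; omega) (by omega)
    exacts [.inl this, .inr (.inl this), .inr (.inr this)]
  rw [isUTri_vtx_iff _ hp hq ha (by push_cast; omega)] at hu
  obtain ⟨h₁, h₂, h₃⟩ := hu
  rw [joined_stripTriang_iff_pSide hlo hhi ha hp (by omega)] at h₁
  rcases (show a + p + q ≤ lo + w ∨ a + p + q = lo + w + 1 by omega) with hin | hapex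
  · rw [joined_stripTriang_iff_pSide hlo hhi (by omega) hq hin] at h₂
    rw [add_assoc, ← Nat.cast_add,
      joined_stripTriang_iff_pSide hlo hhi ha (by omega) (by push_cast; omega)] at h₃
    refine ⟨Sum.inl (a, p, q), ⟨hp, hq, T.pSide_le h₃, h₁, by push_cast at h₂; exact h₂, h₃⟩,
      hcorner, rfl⟩
  · rw [hapex, joined_stripTriang_apex_iff hlo hhi (by omega) (by omega)] at h₂ h₃
    refine ⟨Sum.inr (a, p), ⟨hp, T.pSide_le h₁, h₃, by push_cast at h₂; exact h₂, h₁⟩,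
      by dsimp only [LCorner]; omega, ?_⟩
    simp only [toStripTri]
    congr
    omega

theorem mArcOn_eq_uMatch_stripTriang {I : Finset ℤ}
    (hI : ∀ v ∈ I, lo + N ≤ v ∧ v + N ≤ lo + w) :
    mArcOn T I = UMatch (stripTriang hlo hhi) (I.image (vtx (w + 2) lo)) := by
  have hinj : Set.InjOn (vtx (w + 2) lo) I := fun s hs t ht h => by
    have := hI s hs
    have := hI t ht
    exact eq_of_vtx_eq h (by push_cast; omega) (by push_cast; omega)
  have hin {l : LTri} {v : ℤ} (hv : v ∈ I) (hl : IsPTri T (LProj l)) (hc : LCorner l v) :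
      LIn lo (lo + w) l := by
    have := T.lIn_of_lCorner hl hc
    have := hI v hv
    rcases l with ⟨a, p, q⟩ | ⟨k, m⟩ <;> dsimp only [LIn] at this ⊢ <;> omega
  unfold mArcOn UMatch UMatchIn
  refine ncard_injective_choices_eq (P := fun v l => IsPTri T (LProj l) ∧ LCorner l v.1)
    (Q := fun k u => IsUTri (stripTriang hlo hhi) u ∧ u ∈ Set.univ ∧ UInc k.1 u)
    ((Equiv.Set.imageOfInjOn _ _ hinj).trans (Equiv.setCongr Finset.coe_image.symm))
    (toStripTri lo w) ?_ fun v u => ?_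
  · rintro v v' l l' ⟨hl, hc⟩ ⟨hl', hc'⟩ h
    exact toStripTri_injOn (hin v.2 hl hc) (hin v'.2 hl' hc') h
  · show IsUTri _ u ∧ u ∈ Set.univ ∧ UInc (vtx (w + 2) lo v) u ↔ _
    have := hI v v.2
    constructor
    · rintro ⟨hu, -, hinc⟩
      obtain ⟨l, hl, hc, rfl⟩ := exists_toStripTri_eq hlo hhi hu hinc (by omega) (by omega)
      exact ⟨l, ⟨hl, hc⟩, rfl⟩
    · rintro ⟨l, ⟨hl, hc⟩, rfl⟩
      exact ⟨isUTri_toStripTri hlo hhi hl (hin v.2 hl hc), trivial, uInc_toStripTri hc⟩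

end Strip

lemma spanD_le {N : ℕ} [NeZero N] (i j : ZMod N) : spanD i j ≤ N := by
  unfold spanD
  split_ifs
  exacts [le_rfl, (ZMod.val_lt _).le]

theorem restriction_extends_to_polygon_triangulation_general (N : ℕ) (hN : 3 ≤ N)
    (T : PTriang N) (i j : ZMod N) :
    ∃ (M : ℕ) (_ : 3 ≤ M) (T' : Triang M) (ψ : ℤ → Vx M),
      (∀ t : ℤ, (i.val : ℤ) ≤ t → t < (i.val : ℤ) + (spanD i j : ℤ) →
        ψ (t + 1) = ψ t + 1) ∧
      (∀ s t : ℤ, (i.val : ℤ) ≤ s → s < t → t ≤ (i.val : ℤ) + (spanD i j : ℤ) →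
        ψ s ≠ ψ t) ∧
      (∀ (u : ℤ) (e : ℕ), 2 ≤ e → (i.val : ℤ) ≤ u →
        u + (e : ℤ) ≤ (i.val : ℤ) + (spanD i j : ℤ) →
        (Sum.inl (((u : ZMod N)), e) : PArc N) ∈ T.arcs →
        MemD T' (ψ u) (ψ (u + e))) ∧
      (∀ I : Finset ℤ, I ⊆ interiorIcc i j →
        mArcOn T I = UMatch T' (I.image ψ)) := by
  have : NeZero N := ⟨by omega⟩
  -- `lo ∈ (-3N, -2N]` keeps `[0, 2N]` at distance `N` from both ends of `[lo, lo + 6N]`.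
  obtain ⟨lo, hlo₁, hlo₂, hlo⟩ := T.exists_central_lift (-2 * N)
  have hhi : (Sum.inr ((lo + (6 * N : ℕ) : ℤ) : ZMod N) : PArc N) ∈ T.arcs := by
    simpa using hlo
  have hi : (i.val : ℤ) < N := by exact_mod_cast ZMod.val_lt i
  have hspan : (spanD i j : ℤ) ≤ N := by exact_mod_cast spanD_le i j
  refine ⟨6 * N + 2, by omega, stripTriang hlo hhi, vtx (6 * N + 2) lo,
    fun t _ _ => vtx_add_one t, fun s t hs hst ht h => ?_, fun u e _ hu hue harc => ?_,
    fun I hI => mArcOn_eq_uMatch_stripTriang hlo hhi fun v hv => ?_⟩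
  · exact hst.ne (eq_of_vtx_eq h (by push_cast; omega) (by push_cast; omega))
  · rw [stripTriang, IsChordTriang.memD_vtx_iff _ (by omega) (by omega) (by push_cast; omega)]
    exact (mem_stripChords_arc (by omega) (by push_cast; omega)).2 harc
  · have := hI hv
    simp only [interiorIcc, Finset.mem_Icc] at this
    push_cast
    omega

/-- The restriction of a triangulation `T` of a once-punctured
disc to the truncated unpunctured region `S_{ij}` cut off by the arc `D_{ij}`
(with `j ≠ i + 1`) extends to a triangulation `T'` of an unpunctured disc with a
possibly different set of marked points and the puncture removed: there is a map
`ψ` sending the boundary vertices of `S_{ij}` to consecutive marked points of the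
new disc, carrying arcs of `T` inside `S_{ij}` to diagonals of `T'`, and
matching numbers in `S_{ij}` agree with those in the new disc. -/
theorem restriction_extends_to_polygon_triangulation (N : ℕ) (hN : 3 ≤ N)
    (T : PTriang N) (i j : ZMod N) (hj : j ≠ i + 1) :
    ∃ (M : ℕ) (_ : 3 ≤ M) (T' : Triang M) (ψ : ℤ → Vx M),
      (∀ t : ℤ, (i.val : ℤ) ≤ t → t < (i.val : ℤ) + (spanD i j : ℤ) →
        ψ (t + 1) = ψ t + 1) ∧
      (∀ s t : ℤ, (i.val : ℤ) ≤ s → s < t → t ≤ (i.val : ℤ) + (spanD i j : ℤ) →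
        ψ s ≠ ψ t) ∧
      (∀ (u : ℤ) (e : ℕ), 2 ≤ e → (i.val : ℤ) ≤ u →
        u + (e : ℤ) ≤ (i.val : ℤ) + (spanD i j : ℤ) →
        (Sum.inl (((u : ZMod N)), e) : PArc N) ∈ T.arcs →
        MemD T' (ψ u) (ψ (u + e))) ∧
      (∀ I : Finset ℤ, I ⊆ interiorIcc i j →
        mArcOn T I = UMatch T' (I.image ψ)) :=
  restriction_extends_to_polygon_triangulation_general N hN T i j

end Frieze
end
end

section
/- Let S be a convex polygon with N vertices with triangulation T, let A be a cluster algebra of type A_{N-3} with trivial coefficients whose cluster variables x_{ij} correspond to the diagonals D_{ij} of S, and with initial cluster given by the diagonals of T. Then for any diagonal D_{ij}, the integer u_{ij} obtained by specialising all initial cluster variables to 1 in the Laurent expansion of x_{ij} equals the Conway–Coxeter frieze entry (i,j) of T. -/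
noncomputable section
open scoped Classical

namespace Frieze

/-! ### Auxiliary toolkit -/

section Aux

set_option linter.unusedSectionVars false

variable {N : ℕ} [NeZero N]

/-- Clockwise distance between two vertices. -/
def dlt {N : ℕ} [NeZero N] (a b : Vx N) : ℕ := (b - a).val

lemma btw_iff (a x b : Vx N) : Btw a x b ↔ 0 < dlt a x ∧ dlt a x < dlt a b := Iff.rfl

lemma dlt_lt (a b : Vx N) : dlt a b < N := ZMod.val_lt _

lemma dlt_eq_zero_iff (a b : Vx N) : dlt a b = 0 ↔ b = a := by
  unfold dlt
  rw [ZMod.val_eq_zero, sub_eq_zero]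

lemma add_dlt (a b : Vx N) : a + ((dlt a b : ℕ) : Vx N) = b := by
  unfold dlt
  rw [ZMod.natCast_rightInverse (b - a)]
  ring

lemma dlt_add (j : Vx N) {α β : ℕ} (hα : α < N) (hβ : β < N) :
    dlt (j + (α : Vx N)) (j + (β : Vx N)) = if α ≤ β then β - α else β + N - α := by
  unfold dlt
  have h1 : (j + (β : Vx N)) - (j + (α : Vx N)) = ((β : Vx N) - α) := by ring
  rw [h1]
  split_ifs with h
  · rw [show (β : Vx N) - α = ((β - α : ℕ) : Vx N) by rw [Nat.cast_sub h],
      ZMod.val_cast_of_lt (by omega)]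
  · rw [show (β : Vx N) - α = ((β + N - α : ℕ) : Vx N) by
      rw [Nat.cast_sub (by omega : α ≤ β + N)]
      push_cast [ZMod.natCast_self]
      ring]
    rw [ZMod.val_cast_of_lt (by omega)]

lemma btw_coord (j : Vx N) {α β γ : ℕ} (hα : α < N) (hβ : β < N) (hγ : γ < N) :
    Btw (j + (α : Vx N)) (j + (β : Vx N)) (j + (γ : Vx N)) ↔
      ((α < β ∧ (β < γ ∨ γ < α)) ∨ (β < α ∧ γ < α ∧ β < γ)) := by
  rw [btw_iff, dlt_add j hα hβ, dlt_add j hα hγ]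
  split_ifs <;> omega

lemma coord_eq_iff (j : Vx N) {α β : ℕ} (hα : α < N) (hβ : β < N) :
    (j + (α : Vx N) = j + (β : Vx N)) ↔ α = β := by
  constructor
  · intro h
    have h2 : (α : Vx N) = β := by
      have := congrArg (fun z => z - j) h
      simpa using this
    have h3 := congrArg ZMod.val h2
    rwa [ZMod.val_cast_of_lt hα, ZMod.val_cast_of_lt hβ] at h3
  · rintro rfl; rfl

lemma dlt_self_add (j : Vx N) {α : ℕ} (hα : α < N) : dlt j (j + (α : Vx N)) = α := by
  unfold dlt
  rw [show j + (α : Vx N) - j = (α : Vx N) by ring, ZMod.val_cast_of_lt hα]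

lemma eq_add_one_iff (hN : 2 ≤ N) (v w : Vx N) : w = v + 1 ↔ dlt v w = 1 := by
  constructor
  · rintro rfl
    unfold dlt
    rw [show v + 1 - v = (1 : Vx N) by ring,
      show (1 : Vx N) = ((1 : ℕ) : Vx N) by push_cast; ring, ZMod.val_cast_of_lt (by omega)]
  · intro h
    have h2 := add_dlt v w
    rw [h] at h2
    push_cast at h2
    exact h2.symm

lemma val_eq_iff (a b : Vx N) : a = b ↔ a.val = b.val :=
  ⟨congrArg _, fun h => ZMod.val_injective N h⟩

lemma dlt_symm (a b : Vx N) (h : b ≠ a) : dlt a b + dlt b a = N := by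
  have h1 : dlt a b ≠ 0 := by rw [Ne, dlt_eq_zero_iff]; exact h
  have h2 : dlt a b < N := dlt_lt a b
  have h3 : dlt b a < N := dlt_lt b a
  have e1 : (((b - a).val : ℕ) : Vx N) = b - a := ZMod.natCast_rightInverse _
  have e2 : (((a - b).val : ℕ) : Vx N) = a - b := ZMod.natCast_rightInverse _
  have h4 : ((dlt a b + dlt b a : ℕ) : Vx N) = 0 := by
    unfold dlt
    push_cast [e1, e2]
    ring
  rw [ZMod.natCast_eq_zero_iff] at h4
  obtain ⟨k, hk⟩ := h4
  rcases Nat.lt_or_ge k 2 with hlt | hge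
  · interval_cases k <;> omega
  · have := Nat.mul_le_mul_left N hge
    omega

lemma memD_symm {T : Triang N} {a b : Vx N} (h : MemD T a b) : MemD T b a := h.symm

lemma memD_nocross {T : Triang N} {p1 p2 q1 q2 : Vx N} (hp : MemD T p1 p2)
    (hq : MemD T q1 q2) (h1 : Btw p1 q1 p2) (h2 : Btw p2 q2 p1) : False := by
  rcases hp with hp | hp <;> rcases hq with hq | hq
  · exact T.noncross _ hp _ hq (Or.inl ⟨h1, h2⟩)
  · exact T.noncross _ hp _ hq (Or.inr ⟨h1, h2⟩)
  · exact T.noncross _ hp _ hq (Or.inr ⟨h2, h1⟩)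
  · exact T.noncross _ hp _ hq (Or.inl ⟨h2, h1⟩)

lemma no_cross_side (hN : 2 ≤ N) {T : Triang N} {v w x y : Vx N}
    (hside : w = v + 1 ∨ v = w + 1 ∨ MemD T v w) (hxy : MemD T x y)
    (h1 : Btw v x w) (h2 : Btw w y v) : False := by
  rcases hside with hs | hs | hs
  · rw [eq_add_one_iff hN] at hs
    rw [btw_iff, hs] at h1
    omega
  · rw [eq_add_one_iff hN] at hs
    rw [btw_iff, hs] at h2
    omega
  · exact memD_nocross hs hxy h1 h2

/-- The diagonals of `T` crossing the chord `(i, v)`. -/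
def Cset (T : Triang N) (i v : Vx N) : Finset (Vx N × Vx N) :=
  T.diag.filter (fun e => DCross (i, v) e)

end Aux


/-- Bundled combinatorial data for the recursion step: `i = j + m`, and `d₀ < m < b₀`
are the distances from `j` of the two neighbours of `j` (in the triangulated polygon)
closest to the direction of `i` on either side. -/
structure Setup (N : ℕ) [NeZero N] (T : Triang N) (i j : Vx N) (m d₀ b₀ : ℕ) : Prop where
  hN3 : 3 ≤ N
  him : i = j + ((m : ℕ) : Vx N)
  hm2 : 2 ≤ m
  hmN2 : m ≤ N - 2
  hd₀1 : 1 ≤ d₀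
  hd₀m : d₀ < m
  hmb₀ : m < b₀
  hb₀N : b₀ < N
  sideD : d₀ = 1 ∨ MemD T j (j + ((d₀ : ℕ) : Vx N))
  sideB : b₀ = N - 1 ∨ MemD T j (j + ((b₀ : ℕ) : Vx N))
  dmax : ∀ k, k < N → MemD T j (j + ((k : ℕ) : Vx N)) → k < m → k ≤ d₀
  bmin : ∀ k, k < N → MemD T j (j + ((k : ℕ) : Vx N)) → m < k → b₀ ≤ k
  hnMem : ¬ MemD T i j

namespace Setup

variable {N : ℕ} [NeZero N] {T : Triang N} {i j : Vx N} {m d₀ b₀ : ℕ}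

lemma hmN (S : Setup N T i j m d₀ b₀) : m < N := by have := S.hmN2; have := S.hN3; omega

lemma hd₀N (S : Setup N T i j m d₀ b₀) : d₀ < N := by
  have := S.hd₀m; have := S.hmN; omega

lemma hN2 (S : Setup N T i j m d₀ b₀) : 2 ≤ N := by have := S.hN3; omega

lemma side_d (S : Setup N T i j m d₀ b₀) :
    (j + ((d₀ : ℕ) : Vx N)) = j + 1 ∨ j = (j + ((d₀ : ℕ) : Vx N)) + 1 ∨
      MemD T j (j + ((d₀ : ℕ) : Vx N)) := by
  rcases S.sideD with h | h
  · refine Or.inl ((eq_add_one_iff S.hN2 j _).mpr ?_)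
    rw [dlt_self_add j S.hd₀N]
    exact h
  · exact Or.inr (Or.inr h)

lemma side_b (S : Setup N T i j m d₀ b₀) :
    (j + ((b₀ : ℕ) : Vx N)) = j + 1 ∨ j = (j + ((b₀ : ℕ) : Vx N)) + 1 ∨
      MemD T j (j + ((b₀ : ℕ) : Vx N)) := by
  rcases S.sideB with h | h
  · refine Or.inr (Or.inl ((eq_add_one_iff S.hN2 _ j).mpr ?_))
    have h1 : j + ((b₀ : ℕ) : Vx N) ≠ j := by
      intro h2
      have h3 := dlt_self_add j S.hb₀N
      rw [h2, show dlt j j = 0 by rw [dlt_eq_zero_iff]] at h3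
      have := S.hmb₀; have := S.hm2
      omega
    have h4 := dlt_symm j (j + ((b₀ : ℕ) : Vx N)) h1
    rw [dlt_self_add j S.hb₀N] at h4
    have h5 := S.hN3
    have h6 := S.hmb₀
    omega
  · exact Or.inr (Or.inr h)

end Setup

set_option maxHeartbeats 1000000 in
/-- Existence of the recursion data. -/
lemma setup_exists {N : ℕ} (hN : 3 ≤ N) [NeZero N] (T : Triang N) (i j : Vx N)
    (hji : j ≠ i) (hnj : ¬ Joined T i j) :
    ∃ m d₀ b₀ : ℕ, Setup N T i j m d₀ b₀ := by
  classical
  have hN2 : 2 ≤ N := by omega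
  obtain ⟨m, hm⟩ : ∃ m : ℕ, m = dlt j i := ⟨_, rfl⟩
  have hiN : i = j + (m : Vx N) := by rw [hm]; exact (add_dlt j i).symm
  have hmN : m < N := by rw [hm]; exact dlt_lt j i
  have hm0 : m ≠ 0 := by
    intro h
    rw [hm] at h
    exact hji ((dlt_eq_zero_iff j i).mp h).symm
  have hm1 : m ≠ 1 := by
    intro h
    rw [hm] at h
    exact hnj (Or.inr (Or.inl ((eq_add_one_iff hN2 j i).mpr h)))
  have hdij : dlt i j = N - m := by
    have := dlt_symm j i (Ne.symm hji)
    omega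
  have hmN1 : m ≠ N - 1 := by
    intro h
    exact hnj (Or.inl ((eq_add_one_iff hN2 i j).mpr (by omega)))
  have hm2 : 2 ≤ m := by omega
  have hmN2 : m ≤ N - 2 := by omega
  obtain ⟨NS, hNS⟩ : ∃ NS : Finset ℕ, NS = (Finset.Ioo 0 N).filter
      (fun k => k = 1 ∨ k = N - 1 ∨ MemD T j (j + (k : Vx N))) := ⟨_, rfl⟩
  have hmemNS : ∀ k, k ∈ NS ↔
      (0 < k ∧ k < N ∧ (k = 1 ∨ k = N - 1 ∨ MemD T j (j + (k : Vx N)))) := by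
    intro k
    rw [hNS, Finset.mem_filter, Finset.mem_Ioo]
    tauto
  have h1NS : 1 ∈ NS := (hmemNS 1).mpr ⟨one_pos, by omega, Or.inl rfl⟩
  have hN1NS : N - 1 ∈ NS := (hmemNS _).mpr ⟨by omega, by omega, Or.inr (Or.inl rfl)⟩
  have hDne : (NS.filter (· < m)).Nonempty :=
    ⟨1, by rw [Finset.mem_filter]; exact ⟨h1NS, by omega⟩⟩
  have hBne : (NS.filter (m < ·)).Nonempty :=
    ⟨N - 1, by rw [Finset.mem_filter]; exact ⟨hN1NS, by omega⟩⟩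
  obtain ⟨d₀, hd₀D, hd_max'⟩ : ∃ d₀ ∈ NS.filter (· < m), ∀ k ∈ NS.filter (· < m), k ≤ d₀ :=
    ⟨_, Finset.max'_mem _ hDne, fun k hk => Finset.le_max' _ k hk⟩
  obtain ⟨b₀, hb₀B, hb_min'⟩ : ∃ b₀ ∈ NS.filter (m < ·), ∀ k ∈ NS.filter (m < ·), b₀ ≤ k :=
    ⟨_, Finset.min'_mem _ hBne, fun k hk => Finset.min'_le _ k hk⟩
  rw [Finset.mem_filter] at hd₀D hb₀B
  have hd₀NS := (hmemNS d₀).mp hd₀D.1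
  have hb₀NS := (hmemNS b₀).mp hb₀B.1
  have hmemk : ∀ k, k < N → MemD T j (j + ((k : ℕ) : Vx N)) → 0 < k := by
    intro k hkN hk
    rcases Nat.eq_zero_or_pos k with h | h
    · exfalso
      rw [h] at hk
      have hjj : j + ((0 : ℕ) : Vx N) = j := by push_cast; ring
      rw [hjj] at hk
      rcases hk with hk | hk
      · exact (T.valid _ hk).1 rfl
      · exact (T.valid _ hk).1 rfl
    · exact h
  refine ⟨m, d₀, b₀, ?_⟩
  refine ⟨hN, hiN, hm2, hmN2, hd₀NS.1, hd₀D.2, hb₀B.2, hb₀NS.2.1, ?_, ?_, ?_, ?_, ?_⟩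
  · rcases hd₀NS.2.2 with h | h | h
    · exact Or.inl h
    · omega
    · exact Or.inr h
  · rcases hb₀NS.2.2 with h | h | h
    · omega
    · exact Or.inl h
    · exact Or.inr h
  · intro k hkN hk hkm
    exact hd_max' k (by
      rw [Finset.mem_filter]
      exact ⟨(hmemNS k).mpr ⟨hmemk k hkN hk, hkN, Or.inr (Or.inr hk)⟩, hkm⟩)
  · intro k hkN hk hkm
    exact hb_min' k (by
      rw [Finset.mem_filter]
      exact ⟨(hmemNS k).mpr ⟨hmemk k hkN hk, hkN, Or.inr (Or.inr hk)⟩, hkm⟩)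
  · exact fun h => hnj (Or.inr (Or.inr h))

set_option maxHeartbeats 1000000 in
/-- The chord between the two extreme neighbours is itself a diagonal of `T`. -/
lemma chord_mem {N : ℕ} [NeZero N] {T : Triang N} {i j : Vx N} {m d₀ b₀ : ℕ}
    (S : Setup N T i j m d₀ b₀) :
    MemD T (j + ((d₀ : ℕ) : Vx N)) (j + ((b₀ : ℕ) : Vx N)) := by
  have hN2 := S.hN2
  have hiN := S.him
  have hm2 := S.hm2
  have hmN2 := S.hmN2
  have hmN := S.hmN
  have hd₀1 := S.hd₀1
  have hd₀m := S.hd₀m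
  have hmb₀ := S.hmb₀
  have hb₀N := S.hb₀N
  have hd₀N := S.hd₀N
  have hzN : (0 : ℕ) < N := by omega
  obtain ⟨d, hd⟩ : ∃ d : Vx N, d = j + ((d₀ : ℕ) : Vx N) := ⟨_, rfl⟩
  obtain ⟨b, hb⟩ : ∃ b : Vx N, b = j + ((b₀ : ℕ) : Vx N) := ⟨_, rfl⟩
  have getC : ∀ x : Vx N, ∃ ξ : ℕ, ξ < N ∧ x = j + (ξ : Vx N) :=
    fun x => ⟨dlt j x, dlt_lt j x, (add_dlt j x).symm⟩
  have hside_d := S.side_d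
  have hside_b := S.side_b
  rw [← hd] at hside_d
  rw [← hb] at hside_b
  have core : ∀ x y : Vx N, MemD T x y → Btw d x b → Btw b y d → False := by
    intro x y hmem hx hy
    obtain ⟨ξ, hξN, rfl⟩ := getC x
    obtain ⟨υ, hυN, rfl⟩ := getC y
    rw [hd, hb, btw_coord j hd₀N hξN hb₀N] at hx
    rw [hd, hb, btw_coord j hb₀N hυN hd₀N] at hy
    have hξ2 : d₀ < ξ ∧ ξ < b₀ := by omega
    have hυ2 : υ < d₀ ∨ b₀ < υ := by omega
    by_cases h0 : υ = 0
    · have hyj : j + ((υ : ℕ) : Vx N) = j := by rw [h0]; push_cast; ring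
      rw [hyj] at hmem
      have hmem2 : MemD T j (j + (ξ : Vx N)) := memD_symm hmem
      rcases Nat.lt_trichotomy ξ m with h | h | h
      · have := S.dmax ξ hξN hmem2 h
        omega
      · apply S.hnMem
        have hxi : j + ((ξ : ℕ) : Vx N) = i := by rw [hiN, h]
        rw [hxi] at hmem2
        exact memD_symm hmem2
      · have := S.bmin ξ hξN hmem2 h
        omega
    · rcases hυ2 with hc | hc
      · have hB1 : Btw j (j + ((υ : ℕ) : Vx N)) d := by
          rw [hd]
          have := (btw_coord j hzN hυN hd₀N).mpr (by omega)
          simpa using this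
        have hB2 : Btw d (j + ((ξ : ℕ) : Vx N)) j := by
          rw [hd]
          have := (btw_coord j hd₀N hξN hzN).mpr (by omega)
          simpa using this
        exact no_cross_side hN2 hside_d (memD_symm hmem) hB1 hB2
      · have hB1 : Btw j (j + ((ξ : ℕ) : Vx N)) b := by
          rw [hb]
          have := (btw_coord j hzN hξN hb₀N).mpr (by omega)
          simpa using this
        have hB2 : Btw b (j + ((υ : ℕ) : Vx N)) j := by
          rw [hb]
          have := (btw_coord j hb₀N hυN hzN).mpr (by omega)
          simpa using this
        exact no_cross_side hN2 hside_b hmem hB1 hB2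
  have hdiagdb : IsDiag N (d, b) := by
    refine ⟨?_, ?_, ?_⟩
    · show b ≠ d
      rw [hd, hb, Ne, coord_eq_iff j hb₀N hd₀N]
      omega
    · show b ≠ d + 1
      rw [Ne, eq_add_one_iff hN2, hd, hb, dlt_add j hd₀N hb₀N]
      split_ifs <;> omega
    · show d ≠ b + 1
      rw [Ne, eq_add_one_iff hN2, hd, hb, dlt_add j hb₀N hd₀N]
      split_ifs <;> omega
  have hnc : ∀ e ∈ T.diag, ¬ DCross (d, b) e := by
    intro e he hc
    have hmem : MemD T e.1 e.2 := Or.inl (by simpa using he)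
    rcases hc with ⟨h1, h2⟩ | ⟨h1, h2⟩
    · exact core e.1 e.2 hmem h1 h2
    · exact core e.2 e.1 (memD_symm hmem) h1 h2
  have hdb : MemD T d b := by
    rcases T.maximal (d, b) hdiagdb hnc with h | h
    · exact Or.inl h
    · exact Or.inr h
  rw [hd, hb] at hdb
  exact hdb

set_option maxHeartbeats 1000000 in
/-- The chords `(i,b)` and `(i,d)` cross strictly fewer diagonals of `T` than `(i,j)`. -/
lemma card_lt {N : ℕ} [NeZero N] {T : Triang N} {i j : Vx N} {m d₀ b₀ : ℕ}
    (S : Setup N T i j m d₀ b₀) :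
    (Cset T i (j + ((b₀ : ℕ) : Vx N))).card < (Cset T i j).card ∧
    (Cset T i (j + ((d₀ : ℕ) : Vx N))).card < (Cset T i j).card := by
  have hN2 := S.hN2
  have hiN := S.him
  have hm2 := S.hm2
  have hmN2 := S.hmN2
  have hmN := S.hmN
  have hd₀1 := S.hd₀1
  have hd₀m := S.hd₀m
  have hmb₀ := S.hmb₀
  have hb₀N := S.hb₀N
  have hd₀N := S.hd₀N
  have hzN : (0 : ℕ) < N := by omega
  have hdb0 := chord_mem S
  obtain ⟨d, hd⟩ : ∃ d : Vx N, d = j + ((d₀ : ℕ) : Vx N) := ⟨_, rfl⟩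
  obtain ⟨b, hb⟩ : ∃ b : Vx N, b = j + ((b₀ : ℕ) : Vx N) := ⟨_, rfl⟩
  rw [← hd, ← hb] at hdb0
  have getC : ∀ x : Vx N, ∃ ξ : ℕ, ξ < N ∧ x = j + (ξ : Vx N) :=
    fun x => ⟨dlt j x, dlt_lt j x, (add_dlt j x).symm⟩
  have hside_d := S.side_d
  have hside_b := S.side_b
  rw [← hd] at hside_d
  rw [← hb] at hside_b
  have hsub_b : Cset T i b ⊆ Cset T i j := by
    intro e he
    rw [Cset, Finset.mem_filter] at he ⊢
    obtain ⟨hediag, hecross⟩ := he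
    refine ⟨hediag, ?_⟩
    have hmeme : MemD T e.1 e.2 := Or.inl (by simpa using hediag)
    have main : ∀ x y : Vx N, MemD T x y → Btw i x b → Btw b y i →
        Btw i x j ∧ Btw j y i := by
      intro x y hmem hx hy
      obtain ⟨ξ, hξN, rfl⟩ := getC x
      obtain ⟨υ, hυN, rfl⟩ := getC y
      rw [hiN, hb, btw_coord j hmN hξN hb₀N] at hx
      rw [hiN, hb, btw_coord j hb₀N hυN hmN] at hy
      have hξ2 : m < ξ ∧ ξ < b₀ := by omega
      have hυ2 : b₀ < υ ∨ υ < m := by omega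
      rcases hυ2 with hc | hc
      · exfalso
        have hB1 : Btw j (j + ((ξ : ℕ) : Vx N)) b := by
          rw [hb]
          have := (btw_coord j hzN hξN hb₀N).mpr (by omega)
          simpa using this
        have hB2 : Btw b (j + ((υ : ℕ) : Vx N)) j := by
          rw [hb]
          have := (btw_coord j hb₀N hυN hzN).mpr (by omega)
          simpa using this
        exact no_cross_side hN2 hside_b hmem hB1 hB2
      · by_cases h0 : υ = 0
        · exfalso
          have hyj : j + ((υ : ℕ) : Vx N) = j := by rw [h0]; push_cast; ring
          rw [hyj] at hmem
          have hmem2 : MemD T j (j + (ξ : Vx N)) := memD_symm hmem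
          have := S.bmin ξ hξN hmem2 (by omega)
          omega
        · constructor
          · rw [hiN]
            have := (btw_coord j hmN hξN hzN).mpr (by omega)
            simpa using this
          · rw [hiN]
            have := (btw_coord j hzN hυN hmN).mpr (by omega)
            simpa using this
    rcases hecross with ⟨h1, h2⟩ | ⟨h1, h2⟩
    · exact Or.inl (main e.1 e.2 hmeme h1 h2)
    · exact Or.inr (main e.2 e.1 (memD_symm hmeme) h1 h2)
  have hsub_d : Cset T i d ⊆ Cset T i j := by
    intro e he
    rw [Cset, Finset.mem_filter] at he ⊢
    obtain ⟨hediag, hecross⟩ := he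
    refine ⟨hediag, ?_⟩
    have hmeme : MemD T e.1 e.2 := Or.inl (by simpa using hediag)
    have main : ∀ x y : Vx N, MemD T x y → Btw i x d → Btw d y i →
        Btw i x j ∧ Btw j y i := by
      intro x y hmem hx hy
      obtain ⟨ξ, hξN, rfl⟩ := getC x
      obtain ⟨υ, hυN, rfl⟩ := getC y
      rw [hiN, hd, btw_coord j hmN hξN hd₀N] at hx
      rw [hiN, hd, btw_coord j hd₀N hυN hmN] at hy
      have hξ2 : m < ξ ∨ ξ < d₀ := by omega
      have hυ2 : d₀ < υ ∧ υ < m := by omega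
      rcases hξ2 with hc | hc
      · constructor
        · rw [hiN]
          have := (btw_coord j hmN hξN hzN).mpr (by omega)
          simpa using this
        · rw [hiN]
          have := (btw_coord j hzN hυN hmN).mpr (by omega)
          simpa using this
      · by_cases h0 : ξ = 0
        · exfalso
          have hxj : j + ((ξ : ℕ) : Vx N) = j := by rw [h0]; push_cast; ring
          rw [hxj] at hmem
          have := S.dmax υ hυN hmem (by omega)
          omega
        · exfalso
          have hB1 : Btw j (j + ((ξ : ℕ) : Vx N)) d := by
            rw [hd]
            have := (btw_coord j hzN hξN hd₀N).mpr (by omega)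
            simpa using this
          have hB2 : Btw d (j + ((υ : ℕ) : Vx N)) j := by
            rw [hd]
            have := (btw_coord j hd₀N hυN hzN).mpr (by omega)
            simpa using this
          exact no_cross_side hN2 hside_d hmem hB1 hB2
    rcases hecross with ⟨h1, h2⟩ | ⟨h1, h2⟩
    · exact Or.inl (main e.1 e.2 hmeme h1 h2)
    · exact Or.inr (main e.2 e.1 (memD_symm hmeme) h1 h2)
  have hBtw_ibj : Btw i b j := by
    rw [hiN, hb]
    have := (btw_coord j hmN hb₀N hzN).mpr (by omega)
    simpa using this
  have hBtw_jdi : Btw j d i := by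
    rw [hiN, hd]
    have := (btw_coord j hzN hd₀N hmN).mpr (by omega)
    simpa using this
  have hnBtw_bbi : ¬ Btw i b b := by
    rw [hiN, hb, btw_coord j hmN hb₀N hb₀N]
    omega
  have hnBtw_bbi2 : ¬ Btw b b i := by
    rw [hiN, hb, btw_coord j hb₀N hb₀N hmN]
    omega
  have hnBtw_dd : ¬ Btw i d d := by
    rw [hiN, hd, btw_coord j hmN hd₀N hd₀N]
    omega
  have hnBtw_dd2 : ¬ Btw d d i := by
    rw [hiN, hd, btw_coord j hd₀N hd₀N hmN]
    omega
  have hwit : ∃ e₀ ∈ T.diag, e₀ ∈ Cset T i j ∧ e₀ ∉ Cset T i b ∧ e₀ ∉ Cset T i d := by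
    rcases hdb0 with h | h
    · refine ⟨(d, b), h, ?_, ?_, ?_⟩
      · rw [Cset, Finset.mem_filter]
        exact ⟨h, Or.inr ⟨hBtw_ibj, hBtw_jdi⟩⟩
      · rw [Cset, Finset.mem_filter]
        rintro ⟨-, (⟨h1, h2⟩ | ⟨h1, h2⟩)⟩
        · exact hnBtw_bbi2 h2
        · exact hnBtw_bbi h1
      · rw [Cset, Finset.mem_filter]
        rintro ⟨-, (⟨h1, h2⟩ | ⟨h1, h2⟩)⟩
        · exact hnBtw_dd h1
        · exact hnBtw_dd2 h2
    · refine ⟨(b, d), h, ?_, ?_, ?_⟩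
      · rw [Cset, Finset.mem_filter]
        exact ⟨h, Or.inl ⟨hBtw_ibj, hBtw_jdi⟩⟩
      · rw [Cset, Finset.mem_filter]
        rintro ⟨-, (⟨h1, h2⟩ | ⟨h1, h2⟩)⟩
        · exact hnBtw_bbi h1
        · exact hnBtw_bbi2 h2
      · rw [Cset, Finset.mem_filter]
        rintro ⟨-, (⟨h1, h2⟩ | ⟨h1, h2⟩)⟩
        · exact hnBtw_dd2 h2
        · exact hnBtw_dd h1
  obtain ⟨e₀, he₀diag, he₀j, he₀b, he₀d⟩ := hwit
  constructor
  · rw [← hb]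
    exact Finset.card_lt_card (Finset.ssubset_def.mpr ⟨hsub_b, fun h => he₀b (h he₀j)⟩)
  · rw [← hd]
    exact Finset.card_lt_card (Finset.ssubset_def.mpr ⟨hsub_d, fun h => he₀d (h he₀j)⟩)

set_option maxHeartbeats 1000000 in
/-- The Conway–Coxeter label recursion over the triangle `(b, j, d)`. -/
lemma label_rec {N : ℕ} [NeZero N] {T : Triang N} {i j : Vx N} {m d₀ b₀ : ℕ}
    (S : Setup N T i j m d₀ b₀) (l : Vx N → ℕ) (hl : IsCCLabel T i l) :
    l j = l (j + ((b₀ : ℕ) : Vx N)) + l (j + ((d₀ : ℕ) : Vx N)) := by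
  have hN2 := S.hN2
  have hiN := S.him
  have hm2 := S.hm2
  have hmN2 := S.hmN2
  have hmN := S.hmN
  have hd₀1 := S.hd₀1
  have hd₀m := S.hd₀m
  have hmb₀ := S.hmb₀
  have hb₀N := S.hb₀N
  have hd₀N := S.hd₀N
  have hN3 := S.hN3
  have hdb := chord_mem S
  obtain ⟨d, hd⟩ : ∃ d : Vx N, d = j + ((d₀ : ℕ) : Vx N) := ⟨_, rfl⟩
  obtain ⟨b, hb⟩ : ∃ b : Vx N, b = j + ((b₀ : ℕ) : Vx N) := ⟨_, rfl⟩
  rw [← hd, ← hb] at hdb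
  rw [← hd, ← hb]
  have hSd := S.sideD
  have hSb := S.sideB
  rw [← hd] at hSd
  rw [← hb] at hSb
  have hadd : ∀ (α β : ℕ), (j + (α : Vx N)) + (β : Vx N) = j + ((α + β : ℕ) : Vx N) := by
    intro α β
    push_cast
    ring
  have hpt1 : d + ((b₀ - d₀ : ℕ) : Vx N) = b := by
    rw [hd, hadd, show d₀ + (b₀ - d₀) = b₀ by omega, hb]
  have hpt2 : b + ((N - b₀ : ℕ) : Vx N) = j := by
    rw [hb, hadd, show b₀ + (N - b₀) = N by omega, ZMod.natCast_self, add_zero]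
  have hpt3 : d + ((N - d₀ : ℕ) : Vx N) = j := by
    rw [hd, hadd, show d₀ + (N - d₀) = N by omega, ZMod.natCast_self, add_zero]
  have hpt4 : b + ((N - b₀ + d₀ : ℕ) : Vx N) = d := by
    rw [hb, hadd, show b₀ + (N - b₀ + d₀) = N + d₀ by omega]
    rw [show ((N + d₀ : ℕ) : Vx N) = ((d₀ : ℕ) : Vx N) by push_cast [ZMod.natCast_self]; ring]
    rw [hd]
  have hS1 : USide T j d₀ := by
    rcases hSd with h | h
    · exact Or.inl h
    · exact Or.inr (by rw [← hd]; exact h)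
  have hS2 : USide T d (b₀ - d₀) := Or.inr (by rw [hpt1]; exact hdb)
  have hS3 : USide T b (N - b₀) := by
    rcases hSb with h | h
    · exact Or.inl (by omega)
    · exact Or.inr (by rw [hpt2]; exact memD_symm h)
  have hBtw_dib : Btw d i b := by
    rw [hiN, hd, hb]
    exact (btw_coord j hd₀N hmN hb₀N).mpr (by omega)
  have hdjne : d ≠ j := by
    rw [hd, Ne]
    intro h
    have h3 := dlt_self_add j hd₀N
    rw [h, show dlt j j = 0 by rw [dlt_eq_zero_iff]] at h3
    omega
  have hbjne : b ≠ j := by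
    rw [hb, Ne]
    intro h
    have h3 := dlt_self_add j hb₀N
    rw [h, show dlt j j = 0 by rw [dlt_eq_zero_iff]] at h3
    omega
  have hbdne : b ≠ d := by
    rw [hd, hb, Ne, coord_eq_iff j hb₀N hd₀N]
    omega
  have hvals : (j.val < d.val ∧ j.val < b.val) ∨ (d.val < j.val ∧ d.val < b.val) ∨
      (b.val < j.val ∧ b.val < d.val) := by
    have h1 : j.val ≠ d.val := fun h => hdjne ((val_eq_iff d j).mpr h.symm)
    have h2 : j.val ≠ b.val := fun h => hbjne ((val_eq_iff b j).mpr h.symm)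
    have h3 : b.val ≠ d.val := fun h => hbdne ((val_eq_iff b d).mpr h)
    omega
  rcases hvals with ⟨h1, h2⟩ | ⟨h1, h2⟩ | ⟨h1, h2⟩
  · have hUT : IsUTri T (j, d₀, b₀ - d₀) := by
      refine ⟨show 1 ≤ d₀ by omega, show 1 ≤ b₀ - d₀ by omega,
        show d₀ + (b₀ - d₀) ≤ N - 1 by omega, hS1, ?_, ?_, ?_, ?_⟩
      · show USide T (j + ((d₀ : ℕ) : Vx N)) (b₀ - d₀)
        rw [← hd]; exact hS2
      · show USide T (j + ((d₀ + (b₀ - d₀) : ℕ) : Vx N)) (N - d₀ - (b₀ - d₀))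
        rw [show d₀ + (b₀ - d₀) = b₀ by omega, show N - d₀ - (b₀ - d₀) = N - b₀ by omega,
          ← hb]
        exact hS3
      · show j.val < (j + ((d₀ : ℕ) : Vx N)).val
        rw [← hd]; exact h1
      · show j.val < (j + ((d₀ + (b₀ - d₀) : ℕ) : Vx N)).val
        rw [show d₀ + (b₀ - d₀) = b₀ by omega, ← hb]; exact h2
    obtain ⟨c1, c2, c3⟩ := hl.2.2 j d₀ (b₀ - d₀) hUT
    rw [show d₀ + (b₀ - d₀) = b₀ by omega, ← hd, ← hb] at c3
    have := c3 (Or.inr (Or.inr hBtw_dib))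
    omega
  · have hUT : IsUTri T (d, b₀ - d₀, N - b₀) := by
      refine ⟨show 1 ≤ b₀ - d₀ by omega, show 1 ≤ N - b₀ by omega,
        show b₀ - d₀ + (N - b₀) ≤ N - 1 by omega, hS2, ?_, ?_, ?_, ?_⟩
      · show USide T (d + ((b₀ - d₀ : ℕ) : Vx N)) (N - b₀)
        rw [hpt1]; exact hS3
      · show USide T (d + ((b₀ - d₀ + (N - b₀) : ℕ) : Vx N)) (N - (b₀ - d₀) - (N - b₀))
        rw [show b₀ - d₀ + (N - b₀) = N - d₀ by omega,
          show N - (b₀ - d₀) - (N - b₀) = d₀ by omega, hpt3]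
        exact hS1
      · show d.val < (d + ((b₀ - d₀ : ℕ) : Vx N)).val
        rw [hpt1]; exact h2
      · show d.val < (d + ((b₀ - d₀ + (N - b₀) : ℕ) : Vx N)).val
        rw [show b₀ - d₀ + (N - b₀) = N - d₀ by omega, hpt3]; exact h1
    obtain ⟨c1, c2, c3⟩ := hl.2.2 d (b₀ - d₀) (N - b₀) hUT
    rw [hpt1, show b₀ - d₀ + (N - b₀) = N - d₀ by omega, hpt3] at c2
    have := c2 (Or.inr (Or.inr hBtw_dib))
    omega
  · have hUT : IsUTri T (b, N - b₀, d₀) := by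
      refine ⟨show 1 ≤ N - b₀ by omega, show 1 ≤ d₀ by omega,
        show N - b₀ + d₀ ≤ N - 1 by omega, hS3, ?_, ?_, ?_, ?_⟩
      · show USide T (b + ((N - b₀ : ℕ) : Vx N)) d₀
        rw [hpt2]; exact hS1
      · show USide T (b + ((N - b₀ + d₀ : ℕ) : Vx N)) (N - (N - b₀) - d₀)
        rw [show N - (N - b₀) - d₀ = b₀ - d₀ by omega, hpt4]
        exact hS2
      · show b.val < (b + ((N - b₀ : ℕ) : Vx N)).val
        rw [hpt2]; exact h1
      · show b.val < (b + ((N - b₀ + d₀ : ℕ) : Vx N)).val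
        rw [hpt4]; exact h2
    obtain ⟨c1, c2, c3⟩ := hl.2.2 b (N - b₀) d₀ hUT
    rw [hpt2, hpt4] at c1
    have := c1 (Or.inr (Or.inr hBtw_dib))
    omega

set_option maxHeartbeats 1000000 in
/-- The specialised Ptolemy relation over the quadrilateral `(i, b, j, d)`. -/
lemma ptolemy_rec {N : ℕ} [NeZero N] {T : Triang N} {i j : Vx N} {m d₀ b₀ : ℕ}
    (S : Setup N T i j m d₀ b₀) (u : Vx N → Vx N → ℕ)
    (hsym : ∀ a b, u a b = u b a)
    (hedge : ∀ a, u a (a + 1) = 1)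
    (hT : ∀ a b, MemD T a b → u a b = 1)
    (hptolemy : ∀ a b c e : Vx N, 0 < (b - a).val → (b - a).val < (c - a).val →
      (c - a).val < (e - a).val →
      u a c * u b e = u a b * u c e + u e a * u b c) :
    u i j = u i (j + ((b₀ : ℕ) : Vx N)) + u i (j + ((d₀ : ℕ) : Vx N)) := by
  have hN2 := S.hN2
  have hiN := S.him
  have hm2 := S.hm2
  have hmN2 := S.hmN2
  have hmN := S.hmN
  have hd₀1 := S.hd₀1
  have hd₀m := S.hd₀m
  have hmb₀ := S.hmb₀
  have hb₀N := S.hb₀N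
  have hd₀N := S.hd₀N
  have hN3 := S.hN3
  have hdb := chord_mem S
  obtain ⟨d, hd⟩ : ∃ d : Vx N, d = j + ((d₀ : ℕ) : Vx N) := ⟨_, rfl⟩
  obtain ⟨b, hb⟩ : ∃ b : Vx N, b = j + ((b₀ : ℕ) : Vx N) := ⟨_, rfl⟩
  rw [← hd, ← hb] at hdb
  rw [← hd, ← hb]
  have hSd := S.sideD
  have hSb := S.sideB
  rw [← hd] at hSd
  rw [← hb] at hSb
  have hdjne : d ≠ j := by
    rw [hd, Ne]
    intro h
    have h3 := dlt_self_add j hd₀N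
    rw [h, show dlt j j = 0 by rw [dlt_eq_zero_iff]] at h3
    omega
  have hbjne : b ≠ j := by
    rw [hb, Ne]
    intro h
    have h3 := dlt_self_add j hb₀N
    rw [h, show dlt j j = 0 by rw [dlt_eq_zero_iff]] at h3
    omega
  have hdltjd : dlt j d = d₀ := by rw [hd]; exact dlt_self_add j hd₀N
  have hdltjb : dlt j b = b₀ := by rw [hb]; exact dlt_self_add j hb₀N
  have hdltdj : dlt d j = N - d₀ := by
    have := dlt_symm j d hdjne
    omega
  have hdltbj : dlt b j = N - b₀ := by
    have := dlt_symm j b hbjne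
    omega
  have hjine : j ≠ i := by
    rw [hiN]
    intro h
    have h3 := dlt_self_add j hmN
    rw [← h, show dlt j j = 0 by rw [dlt_eq_zero_iff]] at h3
    omega
  have hdij : dlt i j = N - m := by
    have h4 := dlt_symm j i (Ne.symm hjine)
    have h5 : dlt j i = m := by
      rw [hiN]
      exact dlt_self_add j hmN
    omega
  have hdltib : dlt i b = b₀ - m := by
    rw [hiN, hb, dlt_add j hmN hb₀N, if_pos (by omega)]
  have hdltid : dlt i d = d₀ + N - m := by
    rw [hiN, hd, dlt_add j hmN hd₀N, if_neg (by omega)]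
  have c1 : 0 < dlt i b := by omega
  have c2 : dlt i b < dlt i j := by omega
  have c3 : dlt i j < dlt i d := by omega
  have hP := hptolemy i b j d c1 c2 c3
  have hubd : u b d = 1 := by rw [hsym b d]; exact hT d b hdb
  have hujd : u j d = 1 := by
    rcases hSd with h | h
    · rw [show d = j + 1 from (eq_add_one_iff hN2 j d).mpr (by omega)]
      exact hedge j
    · exact hT j d h
  have hubj : u b j = 1 := by
    rcases hSb with h | h
    · rw [show j = b + 1 from (eq_add_one_iff hN2 b j).mpr (by omega)]
      exact hedge b
    · rw [hsym b j]; exact hT j b h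
  have hudi : u d i = u i d := hsym d i
  rw [hubd, hujd, hubj, hudi, mul_one, mul_one, mul_one] at hP
  exact hP

set_option maxHeartbeats 1000000 in
/-- The recursion step, assembled. -/
lemma key {N : ℕ} (hN : 3 ≤ N) [NeZero N] (T : Triang N) (i j : Vx N)
    (hji : j ≠ i) (hnj : ¬ Joined T i j)
    (u : Vx N → Vx N → ℕ)
    (hsym : ∀ a b, u a b = u b a)
    (hedge : ∀ a, u a (a + 1) = 1)
    (hT : ∀ a b, MemD T a b → u a b = 1)
    (hptolemy : ∀ a b c e : Vx N, 0 < (b - a).val → (b - a).val < (c - a).val →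
      (c - a).val < (e - a).val →
      u a c * u b e = u a b * u c e + u e a * u b c)
    (l : Vx N → ℕ) (hl : IsCCLabel T i l) :
    ∃ b d : Vx N, b ≠ i ∧ d ≠ i ∧
      (Cset T i b).card < (Cset T i j).card ∧
      (Cset T i d).card < (Cset T i j).card ∧
      l j = l b + l d ∧ u i j = u i b + u i d := by
  obtain ⟨m, d₀, b₀, S⟩ := setup_exists hN T i j hji hnj
  refine ⟨j + ((b₀ : ℕ) : Vx N), j + ((d₀ : ℕ) : Vx N), ?_, ?_, (card_lt S).1,
    (card_lt S).2, label_rec S l hl, ptolemy_rec S u hsym hedge hT hptolemy⟩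
  · rw [S.him, Ne, coord_eq_iff j S.hb₀N S.hmN]
    have := S.hmb₀
    omega
  · rw [S.him, Ne, coord_eq_iff j S.hd₀N S.hmN]
    have := S.hd₀m
    omega

set_option maxHeartbeats 1000000 in
/-- Let `T` be a triangulation of a convex `N`-gon and let `u`
assign to each pair of vertices the integer obtained from the cluster variable
`x_{ij}` of the cluster algebra of type `A_{N-3}` (with trivial coefficients and
initial cluster the diagonals of `T`) by specialising all initial cluster
variables to `1`; thus `u` is symmetric, equals `1` on boundary edges and on the
diagonals of `T`, and satisfies the specialised exchange (Ptolemy) relations.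
Then for each diagonal `D_{ij}`, `u i j` equals the Conway–Coxeter frieze entry
`(i,j)` of `T`. -/
theorem cluster_specialisation_eq_frieze_entry (N : ℕ) (hN : 3 ≤ N) [NeZero N]
    (T : Triang N) (u : Vx N → Vx N → ℕ)
    (hsym : ∀ i j, u i j = u j i)
    (hedge : ∀ i, u i (i + 1) = 1)
    (hT : ∀ i j, MemD T i j → u i j = 1)
    (hptolemy : ∀ i j k l : Vx N, 0 < (j - i).val → (j - i).val < (k - i).val →
      (k - i).val < (l - i).val →
      u i k * u j l = u i j * u k l + u l i * u j k) :
    ∀ i j : Vx N, IsDiag N (i, j) → ∀ l : Vx N → ℕ, IsCCLabel T i l →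
      u i j = l j := by
  intro i j hdiag l hl
  have hJcase : ∀ v : Vx N, Joined T i v → u i v = l v := by
    intro v hJ
    rw [hl.2.1 v hJ]
    rcases hJ with h | h | h
    · rw [h]; exact hedge i
    · rw [hsym i v, h]; exact hedge v
    · exact hT i v h
  have H : ∀ n : ℕ, ∀ v : Vx N, (Cset T i v).card ≤ n → v ≠ i → u i v = l v := by
    intro n
    induction n with
    | zero =>
      intro v hc hvi
      by_cases hJ : Joined T i v
      · exact hJcase v hJ
      · exfalso
        obtain ⟨b, d, _, _, hcb, _, _, _⟩ :=
          key hN T i v hvi hJ u hsym hedge hT hptolemy l hl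
        omega
    | succ n ih =>
      intro v hc hvi
      by_cases hJ : Joined T i v
      · exact hJcase v hJ
      · obtain ⟨b, d, hbi, hdi, hcb, hcd, hlv, huv⟩ :=
          key hN T i v hvi hJ u hsym hedge hT hptolemy l hl
        rw [huv, hlv, ih b (by omega) hbi, ih d (by omega) hdi]
  exact H _ j le_rfl hdiag.1

end Frieze
end
end
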